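/- arXiv:2310.02912 — 5 statements merged into one kernel-verified Lean document; each statement's English description precedes it below -/
import Mathlib

section
/- A graph Q is 2-connected if and only if for every partition Q_0 = I_1 ⊔ … ⊔ I_s of its vertex set into at least two nonempty parts, one has the strict inequality b(Q) > b(Q|_{I_1}) + … + b(Q|_{I_s}). -/
/-- A multigraph: finite sets of vertices and edges, loops and parallel edges allowed.
Each edge has two (not necessarily distinct) endpoints `s e`, `t e`. -/
structure Multigraph where
  V : Type
  E : Type
  s : E → V
  t : E → V

namespace Multigraph

variable (G : Multigraph)

/-- Two vertices are adjacent if some edge joins them (in either direction). -/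
def Adj (x y : G.V) : Prop :=
  ∃ e : G.E, (G.s e = x ∧ G.t e = y) ∨ (G.s e = y ∧ G.t e = x)

/-- A graph is connected if it has a vertex and any two vertices are joined by a walk,
i.e. related under the equivalence relation generated by adjacency. -/
def Connected : Prop :=
  Nonempty G.V ∧ ∀ x y : G.V, Relation.EqvGen G.Adj x y

/-- The number `C` of connected components: the cardinality of the set of equivalence
classes of vertices under the equivalence relation generated by adjacency. -/
noncomputable def numComponents : ℕ :=
  Nat.card (Quotient (Relation.EqvGen.setoid G.Adj))

/-- The (first) Betti number `b(G) = C - V + E`. -/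
noncomputable def betti : ℤ :=
  (G.numComponents : ℤ) - (Nat.card G.V : ℤ) + (Nat.card G.E : ℤ)


/-- The graph obtained from `G` by deleting the edge `e`. -/
def deleteEdge (e : G.E) : Multigraph where
  V := G.V
  E := {e' : G.E // e' ≠ e}
  s := fun e' => G.s e'.1
  t := fun e' => G.t e'.1

/-- `G` is 2-connected if it is connected and deleting any single edge leaves it
connected. -/
def TwoConnected : Prop :=
  G.Connected ∧ ∀ e : G.E, (G.deleteEdge e).Connected

/-- The induced subgraph on a part `p⁻¹(k)` of a partition `p : G.V → ι` of the
vertex set. -/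
def induce {ι : Type} (p : G.V → ι) (k : ι) : Multigraph where
  V := {v : G.V // p v = k}
  E := {e : G.E // p (G.s e) = k ∧ p (G.t e) = k}
  s := fun e => ⟨G.s e.1, e.2.1⟩
  t := fun e => ⟨G.t e.1, e.2.2⟩

end Multigraph

open Relation


section RelLemmas
variable {α : Type*}

/-- number of classes of the equivalence generated by a relation -/
noncomputable abbrev nClasses (r : α → α → Prop) : ℕ :=
  Nat.card (Quotient (Relation.EqvGen.setoid r))

lemma eqvGen_mono' {r s : α → α → Prop} (h : ∀ a b, r a b → EqvGen s a b)
    {x y : α} (hxy : EqvGen r x y) : EqvGen s x y := by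
  induction hxy with
  | rel a b hab => exact h a b hab
  | refl a => exact EqvGen.refl a
  | symm a b _ ih => exact EqvGen.symm _ _ ih
  | trans a b c _ _ ih1 ih2 => exact EqvGen.trans _ _ _ ih1 ih2

lemma nClasses_le [Finite α] {r s : α → α → Prop} (h : ∀ a b, r a b → EqvGen s a b) :
    nClasses s ≤ nClasses r := by
  apply Nat.card_le_card_of_surjective
    (Quotient.map' (s₁ := EqvGen.setoid r) (s₂ := EqvGen.setoid s) id
      (fun a b hab => eqvGen_mono' h hab))
  intro c
  refine Quotient.inductionOn c (fun x => ⟨Quotient.mk'' x, rfl⟩)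

lemma nClasses_congr {r s : α → α → Prop} (h : ∀ a b, r a b ↔ s a b) :
    nClasses r = nClasses s := by
  have : r = s := by funext a b; exact propext (h a b)
  rw [this]

/-- the key characterization: adding one pair (u,v) to a relation -/
lemma eqvGen_sup_pair {r : α → α → Prop} (u v : α) {x y : α}
    (h : EqvGen (fun a b => r a b ∨ (a = u ∧ b = v) ∨ (a = v ∧ b = u)) x y) :
    EqvGen r x y ∨ (EqvGen r x u ∧ EqvGen r v y) ∨ (EqvGen r x v ∧ EqvGen r u y) := by
  induction h with
  | rel a b hab =>
    rcases hab with hab | ⟨rfl, rfl⟩ | ⟨rfl, rfl⟩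
    · exact Or.inl (EqvGen.rel _ _ hab)
    · exact Or.inr (Or.inl ⟨EqvGen.refl _, EqvGen.refl _⟩)
    · exact Or.inr (Or.inr ⟨EqvGen.refl _, EqvGen.refl _⟩)
  | refl a => exact Or.inl (EqvGen.refl a)
  | symm a b _ ih =>
    rcases ih with h1 | ⟨h1, h2⟩ | ⟨h1, h2⟩
    · exact Or.inl (EqvGen.symm _ _ h1)
    · exact Or.inr (Or.inr ⟨EqvGen.symm _ _ h2, EqvGen.symm _ _ h1⟩)
    · exact Or.inr (Or.inl ⟨EqvGen.symm _ _ h2, EqvGen.symm _ _ h1⟩)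
  | trans a b c _ _ ih1 ih2 =>
    rcases ih1 with h1 | ⟨h1, h2⟩ | ⟨h1, h2⟩ <;>
      rcases ih2 with h3 | ⟨h3, h4⟩ | ⟨h3, h4⟩
    · exact Or.inl (h1.trans _ _ _ h3)
    · exact Or.inr (Or.inl ⟨h1.trans _ _ _ h3, h4⟩)
    · exact Or.inr (Or.inr ⟨h1.trans _ _ _ h3, h4⟩)
    · exact Or.inr (Or.inl ⟨h1, (h2.trans _ _ _ h3)⟩)
    · exact Or.inr (Or.inl ⟨h1, h4⟩)
    · exact Or.inl (h1.trans _ _ _ h4)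
    · exact Or.inr (Or.inr ⟨h1, h2.trans _ _ _ h3⟩)
    · exact Or.inl (h1.trans _ _ _ h4)
    · exact Or.inr (Or.inr ⟨h1, h4⟩)

/-- adding one pair to the relation decreases the number of classes by at most 1 -/
lemma nClasses_le_add_one [Finite α] (r : α → α → Prop) (u v : α) :
    nClasses r ≤
      nClasses (fun a b => r a b ∨ (a = u ∧ b = v) ∨ (a = v ∧ b = u)) + 1 := by
  classical
  set s : α → α → Prop := fun a b => r a b ∨ (a = u ∧ b = v) ∨ (a = v ∧ b = u) with hs
  have hmap : ∀ a b : α, EqvGen r a b → EqvGen s a b := by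
    intro a b hab
    exact eqvGen_mono' (fun a b h => EqvGen.rel _ _ (Or.inl h)) hab
  let f : Quotient (EqvGen.setoid r) → Quotient (EqvGen.setoid s) :=
    Quotient.map' id hmap
  let g : Quotient (EqvGen.setoid r) → Option (Quotient (EqvGen.setoid s)) :=
    fun c => if c = Quotient.mk (EqvGen.setoid r) v then none else some (f c)
  have hg : Function.Injective g := by
    intro c1 c2 h
    by_cases h1 : c1 = Quotient.mk (EqvGen.setoid r) v <;>
      by_cases h2 : c2 = Quotient.mk (EqvGen.setoid r) v
    · rw [h1, h2]
    · simp only [g, if_pos h1, if_neg h2] at h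
      cases h
    · simp only [g, if_neg h1, if_pos h2] at h
      cases h
    · simp only [g, if_neg h1, if_neg h2, Option.some_inj] at h
      revert h h1 h2
      refine Quotient.inductionOn₂ c1 c2 (fun x y h1 h2 h => ?_)
      have : EqvGen s x y := by
        have := Quotient.exact h
        exact this
      rcases eqvGen_sup_pair u v this with h' | ⟨ha, hb⟩ | ⟨ha, hb⟩
      · exact Quotient.sound h'
      · exact absurd (Quotient.sound (EqvGen.symm _ _ hb)) h2
      · exact absurd (Quotient.sound ha) h1
    done
  haveI : Finite (Quotient (EqvGen.setoid s)) := Quotient.finite _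
  haveI := Fintype.ofFinite (Quotient (EqvGen.setoid s))
  calc nClasses r ≤ Nat.card (Option (Quotient (EqvGen.setoid s))) :=
        Nat.card_le_card_of_injective g hg
    _ = nClasses s + 1 := Finite.card_option

end RelLemmas

lemma nat_card_sigma {ι : Type} [Fintype ι] (f : ι → Type) [∀ i, Finite (f i)] :
    Nat.card ((i : ι) × f i) = ∑ i, Nat.card (f i) := by
  classical
  letI := fun i => Fintype.ofFinite (f i)
  simp [Nat.card_eq_fintype_card, Fintype.card_sigma]

lemma card_subtype_remove {β : Type} [Finite β] (P : β → Prop) (e : β) (he : P e) :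
    Nat.card {x // P x} = Nat.card {x // P x ∧ x ≠ e} + 1 := by
  have hb : Function.Bijective (fun o : Option {x // P x ∧ x ≠ e} =>
      (o.elim ⟨e, he⟩ fun y => ⟨y.1, y.2.1⟩ : {x // P x})) := by
    constructor
    · rintro (_|y1) (_|y2) hxy
      · rfl
      · exact absurd (congrArg Subtype.val hxy).symm y2.2.2
      · exact absurd (congrArg Subtype.val hxy) y1.2.2
      · exact congrArg some (Subtype.ext (Subtype.mk_eq_mk.mp hxy))
    · rintro ⟨x, hx⟩
      by_cases hxe : x = e
      · exact ⟨none, by simp [hxe]⟩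
      · exact ⟨some ⟨x, hx, hxe⟩, rfl⟩
  have := Nat.card_congr (Equiv.ofBijective _ hb)
  rw [Finite.card_option] at this
  omega

lemma card_subtype_add_compl {β : Type} [Finite β] (P : β → Prop) :
    Nat.card {x // P x} + Nat.card {x // ¬ P x} = Nat.card β := by
  classical
  rw [← Nat.card_sum]
  exact Nat.card_congr (Equiv.sumCompl P)



namespace Multigraph

variable (G : Multigraph)

/-- The graph with the same vertices and only the edges satisfying `K`. -/
def restrict (K : G.E → Prop) : Multigraph :=
  ⟨G.V, {e : G.E // K e}, fun e => G.s e.1, fun e => G.t e.1⟩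

lemma numComponents_def (K : G.E → Prop) :
    (G.restrict K).numComponents = nClasses (G.restrict K).Adj := rfl

lemma adj_restrict {K : G.E → Prop} {x y : G.V} :
    (G.restrict K).Adj x y ↔
      ∃ e : G.E, K e ∧ ((G.s e = x ∧ G.t e = y) ∨ (G.s e = y ∧ G.t e = x)) := by
  constructor
  · rintro ⟨⟨e, he⟩, h⟩; exact ⟨e, he, h⟩
  · rintro ⟨e, he, h⟩; exact ⟨⟨e, he⟩, h⟩

lemma numComponents_restrict_congr {K₁ K₂ : G.E → Prop} (h : ∀ e, K₁ e ↔ K₂ e) :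
    (G.restrict K₁).numComponents = (G.restrict K₂).numComponents := by
  apply nClasses_congr
  intro x y
  refine (G.adj_restrict (x := x) (y := y)).trans ?_
  refine Iff.trans ?_ (G.adj_restrict (x := x) (y := y)).symm
  exact exists_congr fun e => and_congr_left fun _ => h e

lemma numComponents_restrict_true :
    (G.restrict fun _ => True).numComponents = G.numComponents := by
  apply nClasses_congr
  intro x y
  refine (G.adj_restrict (x := x) (y := y)).trans ?_
  simp [Adj]

lemma adj_deleteEdge_iff_restrict (e : G.E) {x y : G.V} :
    (G.deleteEdge e).Adj x y ↔ (G.restrict fun e' => e' ≠ e).Adj x y := by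
  constructor
  · rintro ⟨⟨e', he'⟩, h⟩; exact ⟨⟨e', he'⟩, h⟩
  · rintro ⟨⟨e', he'⟩, h⟩; exact ⟨⟨e', he'⟩, h⟩

lemma numComponents_deleteEdge (e : G.E) :
    (G.deleteEdge e).numComponents = (G.restrict fun e' => e' ≠ e).numComponents :=
  nClasses_congr (fun x y => G.adj_deleteEdge_iff_restrict e)

/-- Removing one edge from the allowed set increases `numComponents` by at most 1. -/
lemma numComponents_remove_one [Finite G.V] (K : G.E → Prop) (e : G.E) (he : K e) :
    (G.restrict fun e' => K e' ∧ e' ≠ e).numComponents ≤ (G.restrict K).numComponents + 1 := by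
  set r : G.V → G.V → Prop := (G.restrict fun e' => K e' ∧ e' ≠ e).Adj with hr
  have key : ∀ x y : G.V, (G.restrict K).Adj x y ↔
      (r x y ∨ (x = G.s e ∧ y = G.t e) ∨ (x = G.t e ∧ y = G.s e)) := by
    intro x y
    constructor
    · rw [adj_restrict]
      rintro ⟨e', hKe', h⟩
      by_cases hee : e' = e
      · subst hee
        rcases h with ⟨h1, h2⟩ | ⟨h1, h2⟩
        · exact Or.inr (Or.inl ⟨h1.symm, h2.symm⟩)
        · exact Or.inr (Or.inr ⟨h2.symm, h1.symm⟩)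
      · exact Or.inl ((G.adj_restrict).mpr ⟨e', ⟨hKe', hee⟩, h⟩)
    · rintro (h | ⟨rfl, rfl⟩ | ⟨rfl, rfl⟩)
      · rcases (G.adj_restrict).mp h with ⟨e', ⟨hKe', _⟩, h⟩
        exact (G.adj_restrict).mpr ⟨e', hKe', h⟩
      · exact (G.adj_restrict).mpr ⟨e, he, Or.inl ⟨rfl, rfl⟩⟩
      · exact (G.adj_restrict).mpr ⟨e, he, Or.inr ⟨rfl, rfl⟩⟩
  calc (G.restrict fun e' => K e' ∧ e' ≠ e).numComponents
      ≤ nClasses (fun x y => r x y ∨ (x = G.s e ∧ y = G.t e) ∨ (x = G.t e ∧ y = G.s e)) + 1 :=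
        nClasses_le_add_one r (G.s e) (G.t e)
    _ = (G.restrict K).numComponents + 1 := by
        rw [numComponents_def]
        exact congrArg (· + 1) (nClasses_congr key).symm

/-- Removing a set of edges increases `numComponents` by at most the number
of removed edges. -/
lemma numComponents_restrict_le [Finite G.V] [Finite G.E] :
    ∀ (n : ℕ) (K₁ K₂ : G.E → Prop), (∀ e, K₁ e → K₂ e) →
      Nat.card {e : G.E // K₂ e ∧ ¬ K₁ e} = n →
      (G.restrict K₁).numComponents ≤ (G.restrict K₂).numComponents + n := by
  intro n
  induction n with
  | zero =>
    intro K₁ K₂ h hcard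
    have hemp : IsEmpty {e : G.E // K₂ e ∧ ¬ K₁ e} := by
      rcases Nat.card_eq_zero.mp hcard with h' | h'
      · exact h'
      · exact absurd h'.not_finite (by simp only [not_not]; infer_instance)
    have : ∀ e, K₁ e ↔ K₂ e := fun e =>
      ⟨h e, fun h2 => by_contra fun h1 => hemp.false ⟨e, h2, h1⟩⟩
    rw [G.numComponents_restrict_congr this]
    simp
  | succ n ih =>
    intro K₁ K₂ h hcard
    have hne : Nonempty {e : G.E // K₂ e ∧ ¬ K₁ e} :=
      (Nat.card_ne_zero.mp (by omega)).1
    obtain ⟨e, he2, he1⟩ := hne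
    have h1 : ∀ e', K₁ e' → K₂ e' ∧ e' ≠ e :=
      fun e' h' => ⟨h e' h', fun heq => he1 (heq ▸ h')⟩
    have hcard' : Nat.card {e' : G.E // (K₂ e' ∧ e' ≠ e) ∧ ¬ K₁ e'} = n := by
      have hb : Function.Bijective
          (fun o : Option {e' : G.E // (K₂ e' ∧ e' ≠ e) ∧ ¬ K₁ e'} =>
            (o.elim ⟨e, he2, he1⟩ fun y => ⟨y.1, y.2.1.1, y.2.2⟩ :
              {e' : G.E // K₂ e' ∧ ¬ K₁ e'})) := by
        constructor
        · rintro (_ | y1) (_ | y2) hxy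
          · rfl
          · exact absurd (congrArg Subtype.val hxy).symm y2.2.1.2
          · exact absurd (congrArg Subtype.val hxy) y1.2.1.2
          · simp only [Option.elim] at hxy
            exact congrArg some (Subtype.ext (Subtype.mk_eq_mk.mp hxy))
        · rintro ⟨x, hx2, hx1⟩
          by_cases hxe : x = e
          · exact ⟨none, by simp [hxe]⟩
          · exact ⟨some ⟨x, ⟨hx2, hxe⟩, hx1⟩, rfl⟩
      have := Nat.card_congr (Equiv.ofBijective _ hb)
      rw [Finite.card_option] at this
      omega
    calc (G.restrict K₁).numComponents
        ≤ (G.restrict fun e' => K₂ e' ∧ e' ≠ e).numComponents + n := ih _ _ h1 hcard'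
      _ ≤ ((G.restrict K₂).numComponents + 1) + n :=
          Nat.add_le_add_right (G.numComponents_remove_one K₂ e he2) n
      _ = (G.restrict K₂).numComponents + (n + 1) := by omega



lemma eqvGen_p_invariant {ι : Type} (p : G.V → ι)
    (hK : ∀ e : G.E, p (G.s e) = p (G.t e)) {v w : G.V}
    (h : EqvGen G.Adj v w) : p v = p w := by
  induction h with
  | rel a b hab =>
    obtain ⟨e, h⟩ := hab
    rcases h with ⟨h1, h2⟩ | ⟨h1, h2⟩
    · rw [← h1, ← h2]; exact hK e
    · rw [← h1, ← h2]; exact (hK e).symm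
  | refl a => rfl
  | symm a b _ ih => exact ih.symm
  | trans a b c _ _ ih1 ih2 => exact ih1.trans ih2

lemma numComponents_eq_one (h : G.Connected) : G.numComponents = 1 := by
  obtain ⟨⟨v⟩, hconn⟩ := h
  unfold numComponents
  rw [Nat.card_eq_one_iff_unique]
  refine ⟨⟨fun a b => ?_⟩, ⟨⟦v⟧⟩⟩
  refine Quotient.inductionOn₂ a b fun x y => Quotient.sound (hconn x y)

section Partition

variable {ι : Type} (p : G.V → ι)

/-- the non-crossing edges -/
def noncross : G.E → Prop := fun e => p (G.s e) = p (G.t e)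

lemma restrict_noncross_invariant {v w : G.V}
    (h : EqvGen (G.restrict (G.noncross p)).Adj v w) : p v = p w := by
  refine (G.restrict (G.noncross p)).eqvGen_p_invariant p (fun e => e.2) h

lemma down {v w : G.V} (h : EqvGen (G.restrict (G.noncross p)).Adj v w) :
    ∀ (k : ι) (hv : p v = k) (hw : p w = k),
      EqvGen (G.induce p k).Adj ⟨v, hv⟩ ⟨w, hw⟩ := by
  induction h with
  | rel a b hab =>
    intro k hv hw
    obtain ⟨e, hKe, h⟩ := G.adj_restrict.mp hab
    refine EqvGen.rel _ _ ?_
    rcases h with ⟨h1, h2⟩ | ⟨h1, h2⟩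
    · exact ⟨⟨e, by rw [h1]; exact hv, by rw [h2]; exact hw⟩,
        Or.inl ⟨Subtype.ext h1, Subtype.ext h2⟩⟩
    · exact ⟨⟨e, by rw [h1]; exact hw, by rw [h2]; exact hv⟩,
        Or.inr ⟨Subtype.ext h1, Subtype.ext h2⟩⟩
  | refl a => intro k hv hw; exact EqvGen.refl _
  | symm a b hab ih => intro k hv hw; exact EqvGen.symm _ _ (ih k hw hv)
  | trans a b c hab hbc ih1 ih2 =>
    intro k hv hw
    have hb : p b = k := (G.restrict_noncross_invariant p hab).symm.trans hv
    exact EqvGen.trans _ _ _ (ih1 k hv hb) (ih2 k hb hw)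

lemma up {k : ι} {a b : (G.induce p k).V}
    (h : EqvGen (G.induce p k).Adj a b) :
    EqvGen (G.restrict (G.noncross p)).Adj a.1 b.1 := by
  induction h with
  | rel x y hxy =>
    obtain ⟨e, h⟩ := hxy
    refine EqvGen.rel _ _ (G.adj_restrict.mpr ⟨e.1, e.2.1.trans e.2.2.symm, ?_⟩)
    rcases h with ⟨h1, h2⟩ | ⟨h1, h2⟩
    · exact Or.inl ⟨congrArg Subtype.val h1, congrArg Subtype.val h2⟩
    · exact Or.inr ⟨congrArg Subtype.val h1, congrArg Subtype.val h2⟩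
  | refl x => exact EqvGen.refl _
  | symm x y _ ih => exact EqvGen.symm _ _ ih
  | trans x y z _ _ ih1 ih2 => exact EqvGen.trans _ _ _ ih1 ih2

lemma sum_numComponents [Finite G.V] [Fintype ι] :
    ∑ k : ι, (G.induce p k).numComponents
      = (G.restrict (G.noncross p)).numComponents := by
  haveI : ∀ k : ι, Finite (Quotient (EqvGen.setoid (G.induce p k).Adj)) := fun k =>
    @Quotient.finite (G.induce p k).V (inferInstanceAs (Finite {v : G.V // p v = k})) _
  unfold numComponents
  rw [← nat_card_sigma (fun k => Quotient (EqvGen.setoid (G.induce p k).Adj))]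
  apply Nat.card_congr
  apply Equiv.ofBijective
    (fun c => Sigma.rec (motive := fun _ => Quotient (EqvGen.setoid (G.restrict (G.noncross p)).Adj))
      (fun k c => Quotient.lift (fun a => Quotient.mk _ a.1)
        (fun a b hab => Quotient.sound (G.up p hab)) c) c)
  constructor
  · rintro ⟨k₁, c₁⟩ ⟨k₂, c₂⟩ h
    obtain ⟨a, rfl⟩ := Quotient.exists_rep c₁
    obtain ⟨b, rfl⟩ := Quotient.exists_rep c₂
    simp only at h
    have hR : EqvGen (G.restrict (G.noncross p)).Adj a.1 b.1 := Quotient.exact h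
    have hk : k₁ = k₂ := a.2.symm.trans ((G.restrict_noncross_invariant p hR).trans b.2)
    subst hk
    exact congrArg (Sigma.mk k₁) (Quotient.sound (G.down p hR k₁ a.2 b.2))
  · intro c
    obtain ⟨v, rfl⟩ := Quotient.exists_rep c
    exact ⟨⟨p v, Quotient.mk _ (⟨v, rfl⟩ : (G.induce p (p v)).V)⟩, rfl⟩

lemma sum_card_V [Finite G.V] [Fintype ι] :
    ∑ k : ι, Nat.card (G.induce p k).V = Nat.card G.V := by
  haveI : ∀ k : ι, Finite (G.induce p k).V := fun k =>
    inferInstanceAs (Finite {v : G.V // p v = k})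
  rw [← nat_card_sigma (fun k => (G.induce p k).V)]
  exact Nat.card_congr (Equiv.sigmaFiberEquiv p)

lemma sum_card_E [Finite G.E] [Fintype ι] :
    ∑ k : ι, Nat.card (G.induce p k).E = Nat.card {e : G.E // G.noncross p e} := by
  haveI : ∀ k : ι, Finite (G.induce p k).E := fun k =>
    inferInstanceAs (Finite {e : G.E // p (G.s e) = k ∧ p (G.t e) = k})
  rw [← nat_card_sigma (fun k => (G.induce p k).E)]
  apply Nat.card_congr
  apply Equiv.ofBijective
    (fun x : (k : ι) × (G.induce p k).E =>
      (⟨x.2.1, x.2.2.1.trans x.2.2.2.symm⟩ : {e : G.E // G.noncross p e}))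
  constructor
  · rintro ⟨k₁, e₁⟩ ⟨k₂, e₂⟩ h
    have hval : e₁.1 = e₂.1 := congrArg Subtype.val h
    have hk : k₁ = k₂ := e₁.2.1.symm.trans (by rw [hval]; exact e₂.2.1)
    subst hk
    exact congrArg (Sigma.mk k₁) (Subtype.ext hval)
  · rintro ⟨e, he⟩
    exact ⟨⟨p (G.s e), e, rfl, he.symm⟩, rfl⟩

lemma sum_betti [Finite G.V] [Finite G.E] [Fintype ι] :
    ∑ k : ι, (G.induce p k).betti
      = ((G.restrict (G.noncross p)).numComponents : ℤ)
        - (Nat.card G.V : ℤ) + (Nat.card {e : G.E // G.noncross p e} : ℤ) := by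
  unfold betti
  rw [Finset.sum_add_distrib, Finset.sum_sub_distrib]
  rw [← Nat.cast_sum, ← Nat.cast_sum, ← Nat.cast_sum]
  rw [G.sum_numComponents p, G.sum_card_V p, G.sum_card_E p]

end Partition

end Multigraph

/-- A (nonempty) graph `G` is 2-connected if and only if for every
partition of its vertex set into at least two nonempty parts (encoded by a surjection
`p : G.V → ι` onto a finite index type with `2 ≤ #ι`), one has the strict inequality
`b(G|_{I_1}) + … + b(G|_{I_s}) < b(G)`. -/
theorem twoConnected_iff_betti_partition (G : Multigraph) [Finite G.V] [Finite G.E]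
    [Nonempty G.V] :
    G.TwoConnected ↔
      ∀ (ι : Type) [Fintype ι], ∀ p : G.V → ι, Function.Surjective p →
        2 ≤ Nat.card ι →
        (∑ k : ι, (G.induce p k).betti) < G.betti := by
  open Multigraph in
  constructor
  · rintro ⟨hconn, hdel⟩ ι _ p hsurj hcard
    have hC : G.numComponents = 1 := G.numComponents_eq_one hconn
    have hcross : ∃ e : G.E, ¬ G.noncross p e := by
      by_contra hcon
      push_neg at hcon
      have hconst : ∀ v w : G.V, p v = p w := fun v w =>
        G.eqvGen_p_invariant p hcon (hconn.2 v w)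
      have hnt : Nontrivial ι := Finite.one_lt_card_iff_nontrivial.mp hcard
      obtain ⟨k₁, k₂, hk⟩ := hnt
      obtain ⟨v₁, rfl⟩ := hsurj k₁
      obtain ⟨v₂, rfl⟩ := hsurj k₂
      exact hk (hconst v₁ v₂)
    obtain ⟨e₀, he₀⟩ := hcross
    set n := Nat.card {e' : G.E // e' ≠ e₀ ∧ ¬ G.noncross p e'} with hn
    have h1 : (G.restrict (G.noncross p)).numComponents
        ≤ (G.restrict fun e' => e' ≠ e₀).numComponents + n :=
      G.numComponents_restrict_le n (G.noncross p) (fun e' => e' ≠ e₀)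
        (fun e he heq => he₀ (heq ▸ he)) rfl
    have h2 : (G.restrict fun e' => e' ≠ e₀).numComponents = 1 := by
      rw [← G.numComponents_deleteEdge e₀]
      exact (G.deleteEdge e₀).numComponents_eq_one (hdel e₀)
    have h3 : Nat.card {e' : G.E // ¬ G.noncross p e'} = n + 1 := by
      rw [card_subtype_remove (fun e' => ¬ G.noncross p e') e₀ he₀]
      congr 1
      exact Nat.card_congr (Equiv.subtypeEquivRight (fun x => by tauto))
    have h4 := card_subtype_add_compl (G.noncross p)
    rw [G.sum_betti p]
    unfold Multigraph.betti
    rw [hC]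
    omega
  · intro h
    have hGconn : G.Connected := by
      refine ⟨‹Nonempty G.V›, ?_⟩
      by_contra hny
      push_neg at hny
      obtain ⟨x, y, hxy⟩ := hny
      haveI : Fintype (Quotient (EqvGen.setoid G.Adj)) := Fintype.ofFinite _
      have hnt : Nontrivial (Quotient (EqvGen.setoid G.Adj)) :=
        ⟨Quotient.mk _ x, Quotient.mk _ y, fun hq => hxy (Quotient.exact hq)⟩
      have hlt := h (Quotient (EqvGen.setoid G.Adj)) (Quotient.mk _)
        (fun c => Quotient.exists_rep c)
        (Finite.one_lt_card_iff_nontrivial.mpr hnt)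
      rw [G.sum_betti (Quotient.mk _)] at hlt
      have hnc : ∀ e, G.noncross (Quotient.mk (EqvGen.setoid G.Adj)) e := fun e =>
        Quotient.sound (EqvGen.rel _ _ ⟨e, Or.inl ⟨rfl, rfl⟩⟩)
      have hCeq : (G.restrict (G.noncross (Quotient.mk (EqvGen.setoid G.Adj)))).numComponents
          = G.numComponents := by
        rw [G.numComponents_restrict_congr (K₂ := fun _ => True)
          (fun e => iff_true_intro (hnc e))]
        exact G.numComponents_restrict_true
      have hEeq : Nat.card {e : G.E // G.noncross (Quotient.mk (EqvGen.setoid G.Adj)) e}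
          = Nat.card G.E := Nat.card_congr (Equiv.subtypeUnivEquiv hnc)
      rw [hCeq, hEeq] at hlt
      unfold Multigraph.betti at hlt
      omega
    have hC : G.numComponents = 1 := G.numComponents_eq_one hGconn
    refine ⟨hGconn, fun e => ?_⟩
    set H := G.deleteEdge e with hHdef
    haveI : Finite H.V := inferInstanceAs (Finite G.V)
    haveI : Fintype (Quotient (EqvGen.setoid H.Adj)) := Fintype.ofFinite _
    by_contra hH
    rw [Multigraph.Connected] at hH
    push_neg at hH
    obtain ⟨x, y, hxy⟩ := hH (inferInstanceAs (Nonempty G.V))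
    set p : G.V → Quotient (EqvGen.setoid H.Adj) := Quotient.mk _ with hpdef
    have hnt : Nontrivial (Quotient (EqvGen.setoid H.Adj)) :=
      ⟨Quotient.mk _ x, Quotient.mk _ y, fun hq => hxy (Quotient.exact hq)⟩
    have hCH2 : 2 ≤ H.numComponents := Finite.one_lt_card_iff_nontrivial.mpr hnt
    have hle : H.numComponents ≤ 2 := by
      rw [hHdef, G.numComponents_deleteEdge e]
      have hro := G.numComponents_remove_one (fun _ => True) e trivial
      rw [G.numComponents_restrict_true] at hro
      have hro' : (G.restrict fun e' => True ∧ e' ≠ e).numComponents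
          ≤ G.numComponents + 1 := hro
      rw [G.numComponents_restrict_congr (K₂ := fun e' => True ∧ e' ≠ e)
        (fun e' => by tauto)]
      omega
    have hecross : ¬ G.noncross p e := by
      intro hce
      have hst : EqvGen H.Adj (G.s e) (G.t e) := Quotient.exact hce
      have hmono : ∀ a b : G.V, G.Adj a b → EqvGen H.Adj a b := by
        rintro a b ⟨e', h'⟩
        by_cases hee : e' = e
        · subst hee
          rcases h' with ⟨h1, h2⟩ | ⟨h1, h2⟩
          · rw [← h1, ← h2]; exact hst
          · rw [← h1, ← h2]; exact EqvGen.symm _ _ hst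
        · exact EqvGen.rel _ _ ⟨⟨e', hee⟩, h'⟩
      exact hxy (eqvGen_mono' hmono (hGconn.2 x y))
    have hnc : ∀ e', e' ≠ e → G.noncross p e' := fun e' he' =>
      Quotient.sound (EqvGen.rel _ _ ⟨⟨e', he'⟩, Or.inl ⟨rfl, rfl⟩⟩)
    have hiff : ∀ e', G.noncross p e' ↔ e' ≠ e :=
      fun e' => ⟨fun hh heq => hecross (heq ▸ hh), hnc e'⟩
    have hlt := h (Quotient (EqvGen.setoid H.Adj)) p
      (fun c => Quotient.exists_rep c) (Finite.one_lt_card_iff_nontrivial.mpr hnt)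
    rw [G.sum_betti p] at hlt
    have hCeq : (G.restrict (G.noncross p)).numComponents = H.numComponents := by
      rw [G.numComponents_restrict_congr hiff, hHdef, G.numComponents_deleteEdge e]
    have h6 : Nat.card {e' : G.E // ¬ G.noncross p e'} = 1 := by
      rw [Nat.card_eq_one_iff_unique]
      refine ⟨⟨fun a b => Subtype.ext ?_⟩, ⟨⟨e, fun hh => hecross hh⟩⟩⟩
      have ha : a.1 = e := not_not.mp (fun hne => a.2 ((hiff a.1).mpr hne))
      have hb : b.1 = e := not_not.mp (fun hne => b.2 ((hiff b.1).mpr hne))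
      rw [ha, hb]
    have h4 := card_subtype_add_compl (G.noncross p)
    rw [hCeq] at hlt
    unfold Multigraph.betti at hlt
    rw [hC] at hlt
    have hCH : H.numComponents = 2 := le_antisymm hle hCH2
    omega
end

section
/- Let Q be a quiver, M a locally free representation of Q over O_α = F_q[t]/(t^α) with rank vector r. Then dim_{F_q} End(M) − dim_{F_q} Ext^1(M, M) = α·⟨r, r⟩, where ⟨r, r⟩ = Σ_{i ∈ Q_0} r_i² − Σ_{a : i → j} r_i r_j is the Euler form of Q. -/
/-- A quiver: a set of vertices, a set of arrows, with source and target maps. -/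
structure Quiv where
  V : Type
  A : Type
  s : A → V
  t : A → V

/-- The truncated polynomial ring `O_α = K[t]/(t^α)`. -/
abbrev Oalpha (K : Type) [Field K] (α : ℕ) : Type :=
  Polynomial K ⧸ Ideal.span {(Polynomial.X : Polynomial K) ^ α}


lemma finrank_Oalpha (K : Type) [Field K] (α : ℕ) :
    Module.finrank K (Oalpha K α) = α := by
  have := (AdjoinRoot.powerBasis' (Polynomial.monic_X_pow (R := K) α)).finrank
  simp [AdjoinRoot, AdjoinRoot.powerBasis'] at this
  exact this

instance (K : Type) [Field K] (α : ℕ) : Module.Finite K (Oalpha K α) :=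
  Module.Finite.of_basis (AdjoinRoot.powerBasis' (Polynomial.monic_X_pow (R := K) α)).basis

/-- The standard complex computing `End(M)` and `Ext¹(M, M)` for the locally free
representation `M` of rank vector `r` given by the matrices `x`: the `K`-linear map
`⊕_i Hom(M_i, M_i) → ⊕_{a : i → j} Hom(M_i, M_j)`,
`φ ↦ (φ_{t a} ∘ x_a − x_a ∘ φ_{s a})_a`.  Its kernel is `End(M)` and its cokernel
is `Ext¹(M, M)`. -/
noncomputable def dMap (K : Type) [Field K] (α : ℕ) (Q : Quiv) (r : Q.V → ℕ)
    (x : ∀ a : Q.A, Matrix (Fin (r (Q.t a))) (Fin (r (Q.s a))) (Oalpha K α)) :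
    (∀ i : Q.V, Matrix (Fin (r i)) (Fin (r i)) (Oalpha K α)) →ₗ[K]
      (∀ a : Q.A, Matrix (Fin (r (Q.t a))) (Fin (r (Q.s a))) (Oalpha K α)) where
  toFun φ := fun a => φ (Q.t a) * x a - x a * φ (Q.s a)
  map_add' φ ψ := by
    funext a
    simp only [Pi.add_apply, Matrix.add_mul, Matrix.mul_add]
    abel
  map_smul' c φ := by
    funext a
    simp [Matrix.smul_mul, Matrix.mul_smul, smul_sub]

/-- For a locally free representation `M` (given by matrices `x`) of a
quiver `Q` over `O_α = F_q[t]/(t^α)` with rank vector `r`,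
`dim_{F_q} End(M) − dim_{F_q} Ext¹(M, M) = α ⟨r, r⟩`, where
`⟨r, r⟩ = Σ_i r_i² − Σ_{a : i → j} r_i r_j` is the Euler form of `Q`. -/
theorem end_sub_ext_eq_euler_form (K : Type) [Field K] [Fintype K] (α : ℕ)
    (hα : 1 ≤ α) (Q : Quiv) [Fintype Q.V] [Fintype Q.A] (r : Q.V → ℕ)
    (x : ∀ a : Q.A, Matrix (Fin (r (Q.t a))) (Fin (r (Q.s a))) (Oalpha K α)) :
    (Module.finrank K (LinearMap.ker (dMap K α Q r x)) : ℤ) -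
      (Module.finrank K
        ((∀ a : Q.A, Matrix (Fin (r (Q.t a))) (Fin (r (Q.s a))) (Oalpha K α)) ⧸
          LinearMap.range (dMap K α Q r x)) : ℤ) =
    (α : ℤ) * ((∑ i : Q.V, (r i : ℤ) ^ 2) -
      ∑ a : Q.A, (r (Q.s a) : ℤ) * (r (Q.t a) : ℤ)) := by
  set f := dMap K α Q r x
  have h1 := LinearMap.finrank_range_add_finrank_ker f
  have h2 := Submodule.finrank_quotient_add_finrank (LinearMap.range f)
  have hdom : Module.finrank K (∀ i : Q.V, Matrix (Fin (r i)) (Fin (r i)) (Oalpha K α)) =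
      ∑ i : Q.V, r i * r i * α := by
    rw [Module.finrank_pi_fintype]
    simp [Module.finrank_matrix, finrank_Oalpha]
  have hcod : Module.finrank K
      (∀ a : Q.A, Matrix (Fin (r (Q.t a))) (Fin (r (Q.s a))) (Oalpha K α)) =
      ∑ a : Q.A, r (Q.t a) * r (Q.s a) * α := by
    rw [Module.finrank_pi_fintype]
    simp [Module.finrank_matrix, finrank_Oalpha]
  rw [hdom] at h1
  rw [hcod] at h2
  have : (Module.finrank K (LinearMap.ker f) : ℤ) -
      (Module.finrank K
        ((∀ a : Q.A, Matrix (Fin (r (Q.t a))) (Fin (r (Q.s a))) (Oalpha K α)) ⧸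
          LinearMap.range f) : ℤ) =
      (∑ i : Q.V, r i * r i * α : ℕ) - (∑ a : Q.A, r (Q.t a) * r (Q.s a) * α : ℕ) := by
    omega
  rw [this]
  push_cast
  rw [mul_sub, Finset.mul_sum, Finset.mul_sum]
  congr 1 <;> apply Finset.sum_congr rfl <;> intros <;> ring
end

section
/- Let Q be a quiver, r a rank vector, α ≥ 1, and x ∈ R(Q, r, O_α) a point of the representation space corresponding to a locally free representation M over a finite field. Then the number of points y ∈ R(Q^op, r, O_α) with μ_{Q,r,α}(x, y) = 0 equals # Ext^1(M, M). -/
/-- Transport a square matrix along an equality of sizes. -/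
def castMat {R : Type} {n m : ℕ} (h : n = m) (A : Matrix (Fin n) (Fin n) R) :
    Matrix (Fin m) (Fin m) R :=
  h ▸ A

/-- The moment map `μ_{Q,r,α} : R(Q̄, r, O_α) → gl(r, O_α)` of the double quiver:
`(x, y) ↦ (Σ_{t(a) = i} x_a y_a − Σ_{s(a) = i} y_a x_a)_i`. -/
noncomputable def momentMap (Q : Quiv) [Fintype Q.A] [DecidableEq Q.V] (r : Q.V → ℕ)
    (R : Type) [CommRing R]
    (x : ∀ a : Q.A, Matrix (Fin (r (Q.t a))) (Fin (r (Q.s a))) R)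
    (y : ∀ a : Q.A, Matrix (Fin (r (Q.s a))) (Fin (r (Q.t a))) R) (i : Q.V) :
    Matrix (Fin (r i)) (Fin (r i)) R :=
  (∑ a : Q.A, if h : Q.t a = i then castMat (congrArg r h) (x a * y a) else 0) -
    (∑ a : Q.A, if h : Q.s a = i then castMat (congrArg r h) (y a * x a) else 0)

/-! ### Auxiliary material -/

open Polynomial

/-- The power basis `1, t, …, t^{α-1}` of `O_α`. -/
noncomputable def pbO (K : Type) [Field K] (α : ℕ) : PowerBasis K (Oalpha K α) :=
  AdjoinRoot.powerBasis (pow_ne_zero α Polynomial.X_ne_zero)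

instance inst_s9 (K : Type) [Field K] (α : ℕ) : Module.Finite K (Oalpha K α) :=
  Module.Finite.of_basis (pbO K α).basis

/-- The coefficient of `t^{α-1}`, a linear functional on `O_α` giving a nondegenerate
trace form. -/
noncomputable def tauO (K : Type) [Field K] (α : ℕ) (hα : 1 ≤ α) : Oalpha K α →ₗ[K] K :=
  (pbO K α).basis.coord ⟨α - 1, by rw [show (pbO K α).dim = α by simp [pbO]]; omega⟩

lemma tauO_nondeg (K : Type) [Field K] (α : ℕ) (hα : 1 ≤ α) {f : Oalpha K α} (hf : f ≠ 0) :
    ∃ g : Oalpha K α, tauO K α hα (f * g) ≠ 0 := by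
  classical
  obtain ⟨p, rfl⟩ := AdjoinRoot.mk_surjective (g := (X : K[X]) ^ α) f
  have hXp : ¬ (X : K[X]) ^ α ∣ p := fun h => hf (AdjoinRoot.mk_eq_zero.mpr h)
  have hex : ∃ d, p.coeff d ≠ 0 := by
    rcases not_forall.mp (fun h => hXp (X_pow_dvd_iff.mpr fun d _ => h d)) with ⟨d, hd⟩
    exact ⟨d, hd⟩
  set k := Nat.find hex with hk
  have hck : p.coeff k ≠ 0 := Nat.find_spec hex
  have hkα : k < α := by
    by_contra hge
    exact hXp (X_pow_dvd_iff.mpr fun d hd => not_not.mp (Nat.find_min hex (by omega)))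
  obtain ⟨q, hpq⟩ : (X : K[X]) ^ k ∣ p :=
    X_pow_dvd_iff.mpr fun d hd => not_not.mp (Nat.find_min hex hd)
  have hq0 : q.coeff 0 ≠ 0 := by
    have h3 := coeff_X_pow_mul q k 0
    simp only [zero_add] at h3
    rw [hpq] at hck
    rwa [h3] at hck
  set c := q.coeff 0 with hc
  refine ⟨AdjoinRoot.mk _ (C c⁻¹ * X ^ (α - 1 - k)), ?_⟩
  have hdvd : (X : K[X]) ∣ (C c⁻¹ * q - 1) := by
    rw [X_dvd_iff]
    simp [coeff_C_mul, inv_mul_cancel₀ hq0]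
    exact sub_eq_zero.mpr (inv_mul_cancel₀ hq0)
  obtain ⟨q1, hq1⟩ := hdvd
  have h2 : (C c⁻¹ : K[X]) * q = 1 + X * q1 := by linear_combination hq1
  have hpoly : (X : K[X]) ^ k * q * (C c⁻¹ * X ^ (α - 1 - k)) = X ^ (α - 1) + X ^ α * q1 := by
    have hXX : (X : K[X]) ^ k * X ^ (α - 1 - k) = X ^ (α - 1) := by
      rw [← pow_add]; congr 1; omega
    have hXα : (X : K[X]) ^ (α - 1) * X = X ^ α := by
      rw [← pow_succ]; congr 1; omega
    calc (X : K[X]) ^ k * q * (C c⁻¹ * X ^ (α - 1 - k))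
        = (X ^ k * X ^ (α - 1 - k)) * (C c⁻¹ * q) := by ring
      _ = X ^ (α - 1) * (1 + X * q1) := by rw [hXX, h2]
      _ = X ^ (α - 1) + X ^ α * q1 := by rw [mul_add, mul_one, ← mul_assoc, hXα]
  rw [hpq]
  have key : (AdjoinRoot.mk ((X : K[X]) ^ α)) (X ^ k * q) *
      (AdjoinRoot.mk ((X : K[X]) ^ α)) (C c⁻¹ * X ^ (α - 1 - k)) =
      (pbO K α).gen ^ (α - 1) := by
    rw [← map_mul, hpoly, map_add, (AdjoinRoot.mk_eq_zero).mpr ⟨q1, rfl⟩, add_zero]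
    show _ = (AdjoinRoot.root ((X : K[X]) ^ α)) ^ (α - 1)
    rw [← AdjoinRoot.mk_X, ← map_pow]
  erw [key]
  have hb : (pbO K α).gen ^ (α - 1) =
      (pbO K α).basis ⟨α - 1, by rw [show (pbO K α).dim = α by simp [pbO]]; omega⟩ := by
    rw [(pbO K α).basis_eq_pow]
  rw [hb, tauO, Module.Basis.coord_apply, Module.Basis.repr_self, Finsupp.single_eq_same]
  exact one_ne_zero

section eps
variable (K : Type) [Field K] (α : ℕ) (hα : 1 ≤ α)
variable {ι : Type} [Fintype ι] (n m : ι → ℕ)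

/-- The trace pairing of `∏_i Mat_{n_i × m_i}(O_α)` with `∏_i Mat_{m_i × n_i}(O_α)`,
as a map into the dual space. -/
noncomputable def epsMap :
    (∀ i, Matrix (Fin (n i)) (Fin (m i)) (Oalpha K α)) →ₗ[K]
      Module.Dual K (∀ i, Matrix (Fin (m i)) (Fin (n i)) (Oalpha K α)) where
  toFun y :=
    { toFun := fun z => tauO K α hα (∑ i, ((y i) * (z i)).trace)
      map_add' := fun z w => by
        simp only [Pi.add_apply, Matrix.mul_add, Matrix.trace_add, Finset.sum_add_distrib,
          map_add]
      map_smul' := fun c z => by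
        simp only [Pi.smul_apply, Matrix.mul_smul, Matrix.trace_smul, ← Finset.smul_sum,
          map_smul, RingHom.id_apply, smul_eq_mul] }
  map_add' y w := by
    ext z
    simp only [Pi.add_apply, Matrix.add_mul, Matrix.trace_add, Finset.sum_add_distrib, map_add,
      LinearMap.coe_mk, AddHom.coe_mk, LinearMap.add_apply]
  map_smul' c y := by
    ext z
    simp only [Pi.smul_apply, Matrix.smul_mul, Matrix.trace_smul, ← Finset.smul_sum,
      map_smul, RingHom.id_apply, LinearMap.coe_mk, AddHom.coe_mk, LinearMap.smul_apply,
      smul_eq_mul]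

lemma epsMap_inj : Function.Injective (epsMap K α hα n m) := by
  classical
  rw [← LinearMap.ker_eq_bot, LinearMap.ker_eq_bot']
  intro y hy
  by_contra hy0
  obtain ⟨i0, hi0⟩ := Function.ne_iff.mp hy0
  have hi0' : y i0 ≠ 0 := by simpa using hi0
  have hpq : ∃ p q, y i0 p q ≠ 0 := by
    by_contra h
    push_neg at h
    exact hi0' (by ext p q; simpa using h p q)
  obtain ⟨p, q, hpq⟩ := hpq
  obtain ⟨g, hg⟩ := tauO_nondeg K α hα hpq
  have hsum : ∑ i, ((y i) *
      (Function.update (0 : ∀ i, Matrix (Fin (m i)) (Fin (n i)) (Oalpha K α)) i0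
        (Matrix.single q p g)) i).trace = y i0 p q * g := by
    rw [Finset.sum_eq_single i0]
    · rw [Function.update_self]
      simp [Matrix.trace, Matrix.diag, Matrix.mul_apply, Matrix.single,
        Matrix.of_apply, mul_ite, ite_and, Finset.sum_ite_eq, Finset.sum_ite_eq']
    · intro b _ hb
      rw [Function.update_of_ne hb]
      simp
    · simp
  have h0 : (epsMap K α hα n m) y
      (Function.update (0 : ∀ i, Matrix (Fin (m i)) (Fin (n i)) (Oalpha K α)) i0
        (Matrix.single q p g)) = 0 := by rw [hy]; rfl
  apply hg
  rw [show ((y i0 p q) * g) = ∑ i, ((y i) *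
      (Function.update (0 : ∀ i, Matrix (Fin (m i)) (Fin (n i)) (Oalpha K α)) i0
        (Matrix.single q p g)) i).trace from hsum.symm]
  exact h0
end eps

section mu
set_option maxHeartbeats 1000000
variable (K : Type) [Field K] (α : ℕ) (Q : Quiv) [Fintype Q.A] [Fintype Q.V] [DecidableEq Q.V]
  (r : Q.V → ℕ)
  (x : ∀ a : Q.A, Matrix (Fin (r (Q.t a))) (Fin (r (Q.s a))) (Oalpha K α))

lemma castMat_add {R : Type} [AddCommMonoid R] {n m : ℕ} (h : n = m)
    (A B : Matrix (Fin n) (Fin n) R) :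
    castMat h (A + B) = castMat h A + castMat h B := by subst h; rfl

lemma castMat_smul {S R : Type} [SMul S R] {n m : ℕ} (h : n = m) (c : S)
    (A : Matrix (Fin n) (Fin n) R) :
    castMat h (c • A) = c • castMat h A := by subst h; rfl

/-- `y ↦ μ(x, y)` as a `K`-linear map. -/
noncomputable def muMap :
    (∀ a : Q.A, Matrix (Fin (r (Q.s a))) (Fin (r (Q.t a))) (Oalpha K α)) →ₗ[K]
      (∀ i : Q.V, Matrix (Fin (r i)) (Fin (r i)) (Oalpha K α)) where
  toFun y := momentMap Q r (Oalpha K α) x y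
  map_add' y y' := by
    funext i
    have h1 : ∀ a : Q.A,
        (if h : Q.t a = i then castMat (congrArg r h) (x a * (y a + y' a)) else 0) =
        (if h : Q.t a = i then castMat (congrArg r h) (x a * y a) else 0) +
        (if h : Q.t a = i then castMat (congrArg r h) (x a * y' a) else 0) := fun a => by
      by_cases h : Q.t a = i <;> simp [h, Matrix.mul_add, castMat_add]
    have h2 : ∀ a : Q.A,
        (if h : Q.s a = i then castMat (congrArg r h) ((y a + y' a) * x a) else 0) =
        (if h : Q.s a = i then castMat (congrArg r h) (y a * x a) else 0) +
        (if h : Q.s a = i then castMat (congrArg r h) (y' a * x a) else 0) := fun a => by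
      by_cases h : Q.s a = i <;> simp [h, Matrix.add_mul, castMat_add]
    show momentMap Q r (Oalpha K α) x (y + y') i = _
    show _ = momentMap Q r (Oalpha K α) x y i + momentMap Q r (Oalpha K α) x y' i
    simp only [momentMap, Pi.add_apply, h1, h2, Finset.sum_add_distrib]
    abel
  map_smul' c y := by
    funext i
    have h1 : ∀ a : Q.A,
        (if h : Q.t a = i then castMat (congrArg r h) (x a * (c • y a)) else 0) =
        c • (if h : Q.t a = i then castMat (congrArg r h) (x a * y a) else 0) := fun a => by
      by_cases h : Q.t a = i <;> simp [h, Matrix.mul_smul, castMat_smul]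
    have h2 : ∀ a : Q.A,
        (if h : Q.s a = i then castMat (congrArg r h) ((c • y a) * x a) else 0) =
        c • (if h : Q.s a = i then castMat (congrArg r h) (y a * x a) else 0) := fun a => by
      by_cases h : Q.s a = i <;> simp [h, Matrix.smul_mul, castMat_smul]
    show momentMap Q r (Oalpha K α) x (c • y) i = _
    simp only [RingHom.id_apply, Pi.smul_apply, momentMap, h1, h2, ← Finset.smul_sum,
      ← smul_sub]

/-- The adjunction identity between `μ(x, ·)` and `dMap` under the trace pairings. -/
lemma adj (y : ∀ a : Q.A, Matrix (Fin (r (Q.s a))) (Fin (r (Q.t a))) (Oalpha K α))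
    (φ : ∀ i : Q.V, Matrix (Fin (r i)) (Fin (r i)) (Oalpha K α)) :
    ∑ i : Q.V, ((momentMap Q r (Oalpha K α) x y i) * φ i).trace =
      ∑ a : Q.A, ((y a) * (dMap K α Q r x φ a)).trace := by
  have step1 : ∀ i : Q.V, ((momentMap Q r (Oalpha K α) x y i) * φ i).trace =
      (∑ a : Q.A, if h : Q.t a = i then ((castMat (congrArg r h) (x a * y a)) * φ i).trace else 0)
      - (∑ a : Q.A, if h : Q.s a = i then
          ((castMat (congrArg r h) (y a * x a)) * φ i).trace else 0) := by
    intro i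
    rw [momentMap, Matrix.sub_mul, Matrix.trace_sub, Matrix.sum_mul, Matrix.sum_mul,
      Matrix.trace_sum, Matrix.trace_sum]
    congr 1 <;> apply Finset.sum_congr rfl <;> intro a _ <;> (split <;> simp)
  simp only [step1, Finset.sum_sub_distrib]
  rw [Finset.sum_comm, Finset.sum_comm (γ := Q.V)]
  have c1 : ∀ a : Q.A, (∑ i : Q.V, if h : Q.t a = i then
      ((castMat (congrArg r h) (x a * y a)) * φ i).trace else 0) =
      ((x a * y a) * φ (Q.t a)).trace := by
    intro a
    rw [Finset.sum_dite_eq]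
    simp only [Finset.mem_univ, if_true]
    rfl
  have c2 : ∀ a : Q.A, (∑ i : Q.V, if h : Q.s a = i then
      ((castMat (congrArg r h) (y a * x a)) * φ i).trace else 0) =
      ((y a * x a) * φ (Q.s a)).trace := by
    intro a
    rw [Finset.sum_dite_eq]
    simp only [Finset.mem_univ, if_true]
    rfl
  simp only [c1, c2, ← Finset.sum_sub_distrib]
  apply Finset.sum_congr rfl
  intro a _
  show _ = ((y a) * (φ (Q.t a) * x a - x a * φ (Q.s a))).trace
  rw [Matrix.mul_sub, Matrix.trace_sub]
  congr 1
  · rw [Matrix.mul_assoc, Matrix.trace_mul_comm, Matrix.mul_assoc]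
  · rw [Matrix.mul_assoc]
end mu

set_option maxHeartbeats 2000000 in
set_option synthInstance.maxHeartbeats 400000 in
/-- Let `x ∈ R(Q, r, O_α)` be a point of the representation space over a
finite field, corresponding to a locally free representation `M`.  The number of
points `y ∈ R(Q^op, r, O_α)` with `μ_{Q,r,α}(x, y) = 0` equals `# Ext¹(M, M)`
(where `Ext¹(M, M)` is the cokernel of the standard map `dMap`). -/
theorem card_momentMap_fiber_eq_card_ext (K : Type) [Field K] [Fintype K] (α : ℕ)
    (hα : 1 ≤ α) (Q : Quiv) [Fintype Q.V] [Fintype Q.A] [DecidableEq Q.V]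
    (r : Q.V → ℕ)
    (x : ∀ a : Q.A, Matrix (Fin (r (Q.t a))) (Fin (r (Q.s a))) (Oalpha K α)) :
    Nat.card {y : ∀ a : Q.A, Matrix (Fin (r (Q.s a))) (Fin (r (Q.t a))) (Oalpha K α) //
        ∀ i : Q.V, momentMap Q r (Oalpha K α) x y i = 0} =
      Nat.card
        ((∀ a : Q.A, Matrix (Fin (r (Q.t a))) (Fin (r (Q.s a))) (Oalpha K α)) ⧸
          LinearMap.range (dMap K α Q r x)) := by
  classical
  set μ := muMap K α Q r x with hμ
  set d := dMap K α Q r x with hd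
  set eA := epsMap K α hα (fun a : Q.A => r (Q.s a)) (fun a : Q.A => r (Q.t a)) with heA
  set eB := epsMap K α hα (fun i : Q.V => r i) (fun i : Q.V => r i) with heB
  have key : eB.comp μ = d.dualMap.comp eA := by
    apply LinearMap.ext; intro y
    apply LinearMap.ext; intro φ
    exact congrArg (tauO K α hα) (adj K α Q r x y φ)
  have hinjA : Function.Injective eA := epsMap_inj K α hα _ _
  have hinjB : Function.Injective eB := epsMap_inj K α hα _ _
  have hAA' : Module.finrank K
        (∀ a : Q.A, Matrix (Fin (r (Q.s a))) (Fin (r (Q.t a))) (Oalpha K α)) =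
      Module.finrank K (∀ a : Q.A, Matrix (Fin (r (Q.t a))) (Fin (r (Q.s a))) (Oalpha K α)) :=
    (LinearEquiv.piCongrRight fun a : Q.A =>
      Matrix.transposeLinearEquiv (Fin (r (Q.s a))) (Fin (r (Q.t a))) K (Oalpha K α)).finrank_eq
  have hsurjA : Function.Surjective eA := by
    rw [← LinearMap.range_eq_top]
    apply Submodule.eq_top_of_finrank_eq
    rw [LinearMap.finrank_range_of_inj hinjA, Subspace.dual_finrank_eq]
    exact hAA'
  have hrange : Module.finrank K (LinearMap.range μ) =
      Module.finrank K (LinearMap.range d) := by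
    calc Module.finrank K (LinearMap.range μ)
        = Module.finrank K (Submodule.map eB (LinearMap.range μ)) :=
          (Submodule.equivMapOfInjective eB hinjB _).finrank_eq
      _ = Module.finrank K (LinearMap.range (eB.comp μ)) := by
          rw [LinearMap.range_comp]
      _ = Module.finrank K (LinearMap.range (d.dualMap.comp eA)) := by rw [key]
      _ = Module.finrank K (LinearMap.range d.dualMap) := by
          rw [LinearMap.range_comp, LinearMap.range_eq_top.mpr hsurjA, Submodule.map_top]
      _ = Module.finrank K (LinearMap.range d) :=
          LinearMap.finrank_range_dualMap_eq_finrank_range d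
  have e0 : {y : ∀ a : Q.A, Matrix (Fin (r (Q.s a))) (Fin (r (Q.t a))) (Oalpha K α) //
      ∀ i : Q.V, momentMap Q r (Oalpha K α) x y i = 0} ≃ LinearMap.ker μ :=
    Equiv.subtypeEquivRight fun y => by
      rw [LinearMap.mem_ker]
      constructor
      · intro h
        funext i
        exact h i
      · intro h i
        exact congrFun h i
  rw [Nat.card_congr e0]
  have r1 := LinearMap.finrank_range_add_finrank_ker μ
  have r2 := Submodule.finrank_quotient_add_finrank (LinearMap.range d)
  have hfr : Module.finrank K (LinearMap.ker μ) =
      Module.finrank K ((∀ a : Q.A, Matrix (Fin (r (Q.t a))) (Fin (r (Q.s a))) (Oalpha K α)) ⧸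
        LinearMap.range d) := by
    omega
  obtain ⟨e⟩ := FiniteDimensional.nonempty_linearEquiv_of_finrank_eq hfr
  exact Nat.card_congr e.toEquiv
end

section
/- Let λ ∈ Z^{Q_0} and r ∈ N^{Q_0} with λ · r' ≠ 0 in Z for all 0 < r' < r. Then there exists such a λ (generic with respect to r) if and only if r is indivisible. -/
/-- Bézout over a finset: the gcd is an integer combination. -/
lemma finset_gcd_bezout {ι : Type} [DecidableEq ι] (r : ι → ℕ) (s : Finset ι) :
    ∃ a : ι → ℤ, ∑ i ∈ s, a i * (r i : ℤ) = ((s.gcd r : ℕ) : ℤ) := by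
  induction s using Finset.induction_on with
  | empty => exact ⟨0, by simp⟩
  | @insert j s hi ih =>
    obtain ⟨a, ha⟩ := ih
    refine ⟨fun k => if k = j then Nat.gcdA (r j) (s.gcd r)
      else Nat.gcdB (r j) (s.gcd r) * a k, ?_⟩
    rw [Finset.sum_insert hi, Finset.gcd_insert]
    have hb := Nat.gcd_eq_gcd_ab (r j) (s.gcd r)
    have : ∑ i ∈ s, (if i = j then Nat.gcdA (r j) (s.gcd r)
        else Nat.gcdB (r j) (s.gcd r) * a i) * (r i : ℤ)
        = Nat.gcdB (r j) (s.gcd r) * ∑ i ∈ s, a i * (r i : ℤ) := by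
      rw [Finset.mul_sum]
      refine Finset.sum_congr rfl fun i his => ?_
      have : i ≠ j := fun h => hi (h ▸ his)
      simp [this, mul_assoc]
    rw [this, ha]
    simp only [if_pos rfl]
    have : (((gcd (r j) (s.gcd r) : ℕ)) : ℤ) = ((Nat.gcd (r j) (s.gcd r) : ℕ) : ℤ) := rfl
    rw [this, hb]
    push_cast
    ring

/-- For a nonzero rank vector `r ∈ ℕ^{Q₀}`, there exists
`λ ∈ ℤ^{Q₀}` generic with respect to `r` (i.e. `λ · r = 0` and `λ · r' ≠ 0` for all
`r'` with `0 < r' < r` componentwise) if and only if `r` is indivisible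
(the gcd of its coordinates is `1`). -/
theorem generic_lambda_exists_iff_indivisible (ι : Type) [Fintype ι] [DecidableEq ι]
    (r : ι → ℕ) (hr : r ≠ 0) :
    (∃ lam : ι → ℤ,
      (∑ i, lam i * (r i : ℤ)) = 0 ∧
      ∀ r' : ι → ℕ, r' ≠ 0 → r' ≠ r → (∀ i, r' i ≤ r i) →
        (∑ i, lam i * (r' i : ℤ)) ≠ 0) ↔
    Finset.univ.gcd r = 1 := by
  obtain ⟨i₀, hi₀⟩ : ∃ i, r i ≠ 0 := by
    by_contra h
    push_neg at h
    exact hr (funext fun i => h i)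
  set d := Finset.univ.gcd r with hd
  have hdvd : ∀ i, d ∣ r i := fun i => Finset.gcd_dvd (Finset.mem_univ i)
  have hd0 : d ≠ 0 := fun h => hi₀ (Nat.eq_zero_of_zero_dvd (h ▸ hdvd i₀))
  constructor
  · rintro ⟨lam, hz, hnz⟩
    by_contra hd1
    have hd2 : 2 ≤ d := by omega
    set r' : ι → ℕ := fun i => r i / d with hr'
    have hmul : ∀ i, d * r' i = r i := fun i => Nat.mul_div_cancel' (hdvd i) 
    have h1 : r' ≠ 0 := by
      intro h
      have h0 : r' i₀ = 0 := congrFun h i₀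
      have := hmul i₀
      rw [h0] at this
      simp at this
      exact hi₀ this.symm
    have h2 : r' ≠ r := by
      intro h
      have h0 : r' i₀ = r i₀ := congrFun h i₀
      have := hmul i₀
      rw [h0] at this
      have := Nat.pos_of_ne_zero hi₀
      nlinarith
    have h3 : ∀ i, r' i ≤ r i := fun i => Nat.div_le_self _ _
    have key : (d : ℤ) * ∑ i, lam i * (r' i : ℤ) = 0 := by
      rw [Finset.mul_sum]
      rw [← hz]
      refine Finset.sum_congr rfl fun i _ => ?_
      have := hmul i
      push_cast [← this]
      ring
    have : (∑ i, lam i * (r' i : ℤ)) = 0 := by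
      rcases mul_eq_zero.mp key with h | h
      · exact absurd h (by exact_mod_cast hd0)
      · exact h
    exact hnz r' h1 h2 h3 this
  · intro hg
    obtain ⟨a, ha⟩ := finset_gcd_bezout r Finset.univ
    have hg' : Finset.univ.gcd r = 1 := hg
    rw [hg'] at ha
    set S : ℤ := ∑ i, (r i : ℤ) with hS
    have hSpos : 0 < S := by
      refine Finset.sum_pos' (fun i _ => by positivity) ⟨i₀, Finset.mem_univ i₀, ?_⟩
      exact_mod_cast Nat.pos_of_ne_zero hi₀
    refine ⟨fun i => 1 - a i * S, ?_, ?_⟩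
    · have : ∑ i, (1 - a i * S) * (r i : ℤ)
          = (∑ i, (r i : ℤ)) - S * ∑ i, a i * (r i : ℤ) := by
        rw [Finset.mul_sum, ← Finset.sum_sub_distrib]
        exact Finset.sum_congr rfl fun i _ => by ring
      rw [this, ha]
      simp [hS]
    · intro r' h1 h2 h3 h0
      have hexpand : ∑ i, (1 - a i * S) * (r' i : ℤ)
          = (∑ i, (r' i : ℤ)) - S * ∑ i, a i * (r' i : ℤ) := by
        rw [Finset.mul_sum, ← Finset.sum_sub_distrib]
        exact Finset.sum_congr rfl fun i _ => by ring
      rw [hexpand, sub_eq_zero] at h0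
      set T : ℤ := ∑ i, (r' i : ℤ) with hT
      obtain ⟨j, hj⟩ : ∃ j, r' j ≠ 0 := by
        by_contra h
        push_neg at h
        exact h1 (funext fun i => h i)
      have hTpos : 0 < T :=
        Finset.sum_pos' (fun i _ => by positivity)
          ⟨j, Finset.mem_univ j, by exact_mod_cast Nat.pos_of_ne_zero hj⟩
      obtain ⟨k, hk⟩ : ∃ k, r' k < r k := by
        by_contra h
        push_neg at h
        exact h2 (funext fun i => le_antisymm (h3 i) (h i))
      have hTS : T < S := by
        refine Finset.sum_lt_sum (fun i _ => by exact_mod_cast h3 i)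
          ⟨k, Finset.mem_univ k, by exact_mod_cast hk⟩
      have hdvdT : S ∣ T := ⟨∑ i, a i * (r' i : ℤ), h0⟩
      have := Int.le_of_dvd hTpos hdvdT
      omega
end

section
/- Let Q be a graph, α ≥ 1, and define A_{Q,1,α}(q) := Σ over chains E_1 ⊆ E_2 ⊆ … ⊆ E_α ⊆ Q_1 with Q restricted to E_α connected (spanning all of Q_0) of (q−1)^{b(Q|_{E_α})} · q^{Σ_{k=1}^{α−1} b(Q|_{E_k})}, where Q|_E is the spanning subgraph with edge set E. Then A_{Q,1,α}(q) is a polynomial in q with non-negative integer coefficients. -/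
namespace Multigraph

variable (G : Multigraph)

/-- The Betti number as a natural number, `b(G) = (C + E) - V` (equal to
`C - V + E`, which is non-negative for any graph). -/
noncomputable def bettiNat : ℕ :=
  (G.numComponents + Nat.card G.E) - Nat.card G.V

/-- The spanning subgraph of `G` with all vertices and edge set `E' ⊆ G.E`. -/
def restrictE (E' : Finset G.E) : Multigraph where
  V := G.V
  E := {e : G.E // e ∈ E'}
  s := fun e => G.s e.1
  t := fun e => G.t e.1

end Multigraph

set_option linter.unusedSectionVars false
set_option maxHeartbeats 1000000

open Finset Polynomial

namespace TKP

variable (G : Multigraph) [Fintype G.V] [Fintype G.E] [DecidableEq G.E]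

/-- Reachability inside the spanning subgraph with edge set `S`. -/
def reach (S : Finset G.E) (x y : G.V) : Prop :=
  Relation.EqvGen ((G.restrictE S).Adj) x y

/-- The endpoints of `e` are connected within `S`. -/
def conn (e : G.E) (S : Finset G.E) : Prop := reach G S (G.s e) (G.t e)

noncomputable def cc (S : Finset G.E) : ℕ := (G.restrictE S).numComponents

noncomputable def bN (S : Finset G.E) : ℕ := (G.restrictE S).bettiNat

variable {G}

lemma adj_restrict_iff {S : Finset G.E} {x y : G.V} :
    (G.restrictE S).Adj x y ↔
      ∃ e ∈ S, (G.s e = x ∧ G.t e = y) ∨ (G.s e = y ∧ G.t e = x) := by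
  constructor
  · rintro ⟨⟨e, he⟩, h⟩; exact ⟨e, he, h⟩
  · rintro ⟨e, he, h⟩; exact ⟨⟨e, he⟩, h⟩

lemma reach_mono {S S' : Finset G.E} (hss : S ⊆ S') {x y : G.V}
    (h : reach G S x y) : reach G S' x y := by
  refine Relation.EqvGen.mono (fun (a b : G.V) hab => ?_) _ _ h
  rw [adj_restrict_iff] at hab ⊢
  obtain ⟨e, he, h'⟩ := hab
  exact ⟨e, hss he, h'⟩

lemma reach_refl (S : Finset G.E) (x : G.V) : reach G S x x :=
  Relation.EqvGen.refl x

lemma reach_symm {S : Finset G.E} {x y : G.V} (h : reach G S x y) : reach G S y x :=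
  Relation.EqvGen.symm _ _ h

lemma reach_trans {S : Finset G.E} {x y z : G.V} (h : reach G S x y)
    (h' : reach G S y z) : reach G S x z :=
  Relation.EqvGen.trans _ _ _ h h'

lemma conn_mono {S S' : Finset G.E} (hss : S ⊆ S') {e : G.E}
    (h : conn G e S) : conn G e S' := reach_mono hss h

lemma conn_self {e : G.E} {S : Finset G.E} (he : e ∈ S) : conn G e S :=
  Relation.EqvGen.rel _ _ ⟨⟨e, he⟩, Or.inl ⟨rfl, rfl⟩⟩

end TKP

namespace TKP

variable {G : Multigraph} [Fintype G.V] [Fintype G.E] [DecidableEq G.E]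

lemma cc_congr {S S' : Finset G.E}
    (h : ∀ x y : G.V, reach G S x y ↔ reach G S' x y) : cc G S = cc G S' := by
  unfold cc Multigraph.numComponents
  have : Relation.EqvGen.setoid ((G.restrictE S).Adj)
      = Relation.EqvGen.setoid ((G.restrictE S').Adj) := by
    apply Setoid.ext
    intro a b
    exact h a b
  exact congrArg (fun s => Nat.card (Quotient s)) this

lemma reach_empty {x y : G.V} (h : reach G (∅ : Finset G.E) x y) : x = y := by
  induction h with
  | rel a b hab => obtain ⟨⟨e, he⟩, _⟩ := hab; exact absurd he (Finset.notMem_empty e)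
  | refl a => rfl
  | symm a b _ ih => exact ih.symm
  | trans a b c _ _ ih1 ih2 => exact ih1.trans ih2

lemma cc_empty : cc G (∅ : Finset G.E) = Fintype.card G.V := by
  unfold cc Multigraph.numComponents
  have e : Quotient (Relation.EqvGen.setoid ((G.restrictE (∅ : Finset G.E)).Adj)) ≃ G.V := by
    refine Equiv.ofBijective (Quotient.lift id fun a b h => reach_empty (G := G) h) ⟨?_, ?_⟩
    · rintro ⟨a⟩ ⟨b⟩ h
      have hab : a = b := h
      exact congrArg _ hab
    · intro v; exact ⟨Quotient.mk _ v, rfl⟩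
  rw [Nat.card_congr e, Nat.card_eq_fintype_card]

lemma reach_insert_iff_of_conn {e : G.E} {S : Finset G.E} (h : conn G e S) {x y : G.V} :
    reach G (insert e S) x y ↔ reach G S x y := by
  constructor
  · intro hr
    induction hr with
    | rel a b hab =>
      rw [adj_restrict_iff] at hab
      obtain ⟨f, hf, hor⟩ := hab
      rcases Finset.mem_insert.mp hf with rfl | hfS
      · rcases hor with ⟨h1, h2⟩ | ⟨h1, h2⟩
        · rw [← h1, ← h2]; exact h
        · rw [← h1, ← h2]; exact reach_symm h
      · exact Relation.EqvGen.rel _ _ (adj_restrict_iff.mpr ⟨f, hfS, hor⟩)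
    | refl a => exact reach_refl _ _
    | symm a b _ ih => exact reach_symm ih
    | trans a b c _ _ ih1 ih2 => exact reach_trans ih1 ih2
  · exact reach_mono (Finset.subset_insert e S)

lemma cc_insert_of_conn {e : G.E} {S : Finset G.E} (h : conn G e S) :
    cc G (insert e S) = cc G S :=
  cc_congr fun _ _ => reach_insert_iff_of_conn h

end TKP

namespace TKP

variable {G : Multigraph} [Fintype G.V] [Fintype G.E] [DecidableEq G.E]

lemma reach_insert_iff {e : G.E} {S : Finset G.E} (h : ¬ conn G e S) {x y : G.V} :
    reach G (insert e S) x y ↔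
      reach G S x y ∨ (reach G S x (G.s e) ∧ reach G S (G.t e) y) ∨
        (reach G S x (G.t e) ∧ reach G S (G.s e) y) := by
  constructor
  · intro hr
    induction hr with
    | rel a b hab =>
      rw [adj_restrict_iff] at hab
      obtain ⟨f, hf, hor⟩ := hab
      rcases Finset.mem_insert.mp hf with rfl | hfS
      · rcases hor with ⟨h1, h2⟩ | ⟨h1, h2⟩
        · subst h1; subst h2; exact Or.inr (Or.inl ⟨reach_refl _ _, reach_refl _ _⟩)
        · subst h1; subst h2; exact Or.inr (Or.inr ⟨reach_refl _ _, reach_refl _ _⟩)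
      · exact Or.inl (Relation.EqvGen.rel _ _ (adj_restrict_iff.mpr ⟨f, hfS, hor⟩))
    | refl a => exact Or.inl (reach_refl _ _)
    | symm a b _ ih =>
      rcases ih with h1 | ⟨h1, h2⟩ | ⟨h1, h2⟩
      · exact Or.inl (reach_symm h1)
      · exact Or.inr (Or.inr ⟨reach_symm h2, reach_symm h1⟩)
      · exact Or.inr (Or.inl ⟨reach_symm h2, reach_symm h1⟩)
    | trans a b c _ _ ih1 ih2 =>
      rcases ih1 with h1 | ⟨h1, h2⟩ | ⟨h1, h2⟩
      · rcases ih2 with g1 | ⟨g1, g2⟩ | ⟨g1, g2⟩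
        · exact Or.inl (reach_trans h1 g1)
        · exact Or.inr (Or.inl ⟨reach_trans h1 g1, g2⟩)
        · exact Or.inr (Or.inr ⟨reach_trans h1 g1, g2⟩)
      · rcases ih2 with g1 | ⟨g1, g2⟩ | ⟨g1, g2⟩
        · exact Or.inr (Or.inl ⟨h1, reach_trans h2 g1⟩)
        · exact absurd (reach_symm (reach_trans h2 g1)) h
        · exact Or.inl (reach_trans h1 g2)
      · rcases ih2 with g1 | ⟨g1, g2⟩ | ⟨g1, g2⟩
        · exact Or.inr (Or.inr ⟨h1, reach_trans h2 g1⟩)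
        · exact Or.inl (reach_trans h1 g2)
        · exact absurd (reach_trans h2 g1) h
  · have hse : reach G (insert e S) (G.s e) (G.t e) :=
      conn_self (Finset.mem_insert_self e S)
    rintro (h1 | ⟨h1, h2⟩ | ⟨h1, h2⟩)
    · exact reach_mono (Finset.subset_insert e S) h1
    · exact reach_trans (reach_mono (Finset.subset_insert e S) h1)
        (reach_trans hse (reach_mono (Finset.subset_insert e S) h2))
    · exact reach_trans (reach_mono (Finset.subset_insert e S) h1)
        (reach_trans (reach_symm hse) (reach_mono (Finset.subset_insert e S) h2))

lemma cc_insert_of_not_conn {e : G.E} {S : Finset G.E} (h : ¬ conn G e S) :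
    cc G (insert e S) + 1 = cc G S := by
  classical
  set s1 : Setoid G.V := Relation.EqvGen.setoid ((G.restrictE S).Adj) with hs1
  set s2 : Setoid G.V := Relation.EqvGen.setoid ((G.restrictE (insert e S)).Adj) with hs2
  have key : ∀ x y : G.V, Relation.EqvGen ((G.restrictE (insert e S)).Adj) x y ↔
      reach G S x y ∨ (reach G S x (G.s e) ∧ reach G S (G.t e) y) ∨
        (reach G S x (G.t e) ∧ reach G S (G.s e) y) := fun x y => reach_insert_iff h
  set B : Quotient s1 := Quotient.mk s1 (G.t e) with hB
  have hmap : ∀ (a b : G.V), Relation.EqvGen ((G.restrictE S).Adj) a b →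
      Quotient.mk s2 a = Quotient.mk s2 b := by
    intro a b hab
    exact Quotient.sound (reach_mono (Finset.subset_insert e S) hab)
  let φ : Quotient s1 → Quotient s2 := Quotient.lift (fun v => Quotient.mk s2 v)
    (fun a b hab => hmap a b hab)
  have hbij : Function.Bijective (fun x : {x : Quotient s1 // x ≠ B} => φ x.1) := by
    constructor
    · rintro ⟨x, hx⟩ ⟨y, hy⟩ hxy
      induction x using Quotient.ind with | _ u =>
      induction y using Quotient.ind with | _ v =>
      have huv : Relation.EqvGen ((G.restrictE (insert e S)).Adj) u v :=
        Quotient.exact hxy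
      rw [key u v] at huv
      apply Subtype.ext
      rcases huv with h1 | ⟨h1, h2⟩ | ⟨h1, h2⟩
      · exact Quotient.sound h1
      · exact absurd (Quotient.sound (reach_symm h2) : Quotient.mk s1 v = B) hy
      · exact absurd (Quotient.sound h1 : Quotient.mk s1 u = B) hx
    · intro q
      induction q using Quotient.ind with | _ v =>
      by_cases hv : reach G S v (G.t e)
      · refine ⟨⟨Quotient.mk s1 (G.s e), fun hc => h ?_⟩, ?_⟩
        · exact (Quotient.exact hc : Relation.EqvGen _ (G.s e) (G.t e))
        · refine Quotient.sound ?_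
          show Relation.EqvGen ((G.restrictE (insert e S)).Adj) (G.s e) v
          rw [key]
          exact Or.inr (Or.inl ⟨reach_refl _ _, reach_symm hv⟩)
      · refine ⟨⟨Quotient.mk s1 v, fun hc => hv ?_⟩, rfl⟩
        exact (Quotient.exact hc : Relation.EqvGen _ v (G.t e))
  have e2 : Quotient s2 ≃ {x : Quotient s1 // x ≠ B} := (Equiv.ofBijective _ hbij).symm
  have hfin : Finite (Quotient s1) := Quotient.finite s1
  have e1 : Option {x : Quotient s1 // x ≠ B} ≃ Quotient s1 := Equiv.optionSubtypeNe B
  have hcard : cc G (insert e S) = Nat.card {x : Quotient s1 // x ≠ B} := by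
    unfold cc Multigraph.numComponents
    exact Nat.card_congr e2
  have hcard2 : cc G S = Nat.card {x : Quotient s1 // x ≠ B} + 1 := by
    unfold cc Multigraph.numComponents
    have := Nat.card_congr e1.symm
    refine Eq.trans this ?_
    letI : Fintype (Quotient s1) := Fintype.ofFinite _
    letI : Fintype {x : Quotient s1 // x ≠ B} := Fintype.ofFinite _
    rw [Nat.card_eq_fintype_card, Nat.card_eq_fintype_card]
    rw [Fintype.card_option]
  omega

end TKP

namespace TKP

variable {G : Multigraph} [Fintype G.V] [Fintype G.E] [DecidableEq G.E]

lemma cc_insert_le (e : G.E) (S : Finset G.E) : cc G (insert e S) ≤ cc G S := by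
  classical
  by_cases h : conn G e S
  · rw [cc_insert_of_conn h]
  · have := cc_insert_of_not_conn h; omega

lemma cc_le_of_subset {S S' : Finset G.E} (h : S ⊆ S') : cc G S' ≤ cc G S := by
  classical
  have hrep : S' = S ∪ (S' \ S) := by rw [Finset.union_sdiff_of_subset h]
  rw [hrep]
  induction S' \ S using Finset.induction_on with
  | empty => rw [Finset.union_empty]
  | @insert a A ha ih =>
    rw [Finset.union_insert] at *
    calc cc G (insert a (S ∪ A)) ≤ cc G (S ∪ A) := cc_insert_le _ _
      _ ≤ cc G S := ih

lemma conn_of_cc_eq {T P : Finset G.E} (hTP : T ⊆ P) (hcc : cc G T = cc G P)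
    {e : G.E} (h : conn G e P) : conn G e T := by
  classical
  by_contra hc
  have h1 : cc G (insert e T) + 1 = cc G T := cc_insert_of_not_conn hc
  have h2 : cc G (insert e P) = cc G P := cc_insert_of_conn h
  have h3 : cc G (insert e P) ≤ cc G (insert e T) :=
    cc_le_of_subset (Finset.insert_subset_insert e hTP)
  omega

lemma card_add_cc (S : Finset G.E) : Fintype.card G.V ≤ cc G S + S.card := by
  classical
  induction S using Finset.induction_on with
  | empty => rw [cc_empty]; simp
  | @insert a A ha ih =>
    rw [Finset.card_insert_of_notMem ha]
    by_cases h : conn G a A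
    · rw [cc_insert_of_conn h]; omega
    · have := cc_insert_of_not_conn h; omega

lemma cc_pos (S : Finset G.E) : 0 < cc G S ∨ Fintype.card G.V = 0 := by
  classical
  rcases Nat.eq_zero_or_pos (Fintype.card G.V) with h | h
  · exact Or.inr h
  · left
    have : Nonempty G.V := Fintype.card_pos_iff.mp h
    obtain ⟨v⟩ := this
    have : (Quotient.mk (Relation.EqvGen.setoid ((G.restrictE S).Adj)) v) =
      (Quotient.mk _ v) := rfl
    unfold cc Multigraph.numComponents
    have hne : Nonempty (Quotient (Relation.EqvGen.setoid ((G.restrictE S).Adj))) :=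
      ⟨Quotient.mk _ v⟩
    haveI : Finite (G.restrictE S).V := inferInstanceAs (Finite G.V)
    haveI : Finite (Quotient (Relation.EqvGen.setoid ((G.restrictE S).Adj))) :=
      Quotient.finite _
    exact Nat.card_pos

lemma bN_eq (S : Finset G.E) : bN G S = cc G S + S.card - Fintype.card G.V := by
  classical
  have h1 : Nat.card (G.restrictE S).E = S.card := by
    have : Nat.card {e : G.E // e ∈ S} = S.card := by
      rw [Nat.card_eq_fintype_card]; exact Fintype.card_coe S
    exact this
  have h2 : Nat.card (G.restrictE S).V = Fintype.card G.V := by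
    have : Nat.card G.V = Fintype.card G.V := Nat.card_eq_fintype_card
    exact this
  unfold bN Multigraph.bettiNat
  rw [h1, h2]
  rfl

lemma bN_insert_of_conn {e : G.E} {S : Finset G.E} (he : e ∉ S) (h : conn G e S) :
    bN G (insert e S) = bN G S + 1 := by
  classical
  rw [bN_eq, bN_eq, cc_insert_of_conn h, Finset.card_insert_of_notMem he]
  have := card_add_cc (G := G) S
  omega

lemma bN_insert_of_not_conn {e : G.E} {S : Finset G.E} (he : e ∉ S) (h : ¬ conn G e S) :
    bN G (insert e S) = bN G S := by
  classical
  rw [bN_eq, bN_eq, Finset.card_insert_of_notMem he]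
  have h2 := cc_insert_of_not_conn h
  omega

lemma connected_restrict_iff {S : Finset G.E} (hne : Nonempty G.V) :
    (G.restrictE S).Connected ↔ cc G S = 1 := by
  classical
  constructor
  · rintro ⟨-, hall⟩
    unfold cc Multigraph.numComponents
    rw [Nat.card_eq_one_iff_unique]
    constructor
    · constructor
      intro a b
      induction a using Quotient.ind with | _ u =>
      induction b using Quotient.ind with | _ v =>
      exact Quotient.sound (hall u v)
    · obtain ⟨v⟩ := hne; exact ⟨Quotient.mk _ v⟩
  · intro h1
    refine ⟨hne, fun x y => ?_⟩
    unfold cc Multigraph.numComponents at h1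
    rw [Nat.card_eq_one_iff_unique] at h1
    have := h1.1
    exact Quotient.exact (this.allEq (Quotient.mk _ x) (Quotient.mk _ y))

end TKP

namespace TKP

open scoped Classical

section Comb

variable (G : Multigraph) [Fintype G.V] [Fintype G.E] [DecidableEq G.E] (α : ℕ)

/-- An injective numbering of the edges. -/
noncomputable def idx (e : G.E) : ℕ := ((Fintype.equivFin G.E) e : ℕ)

/-- Number of edges. -/
def MM : ℕ := Fintype.card G.E

lemma idx_lt (e : G.E) : idx G e < MM G := ((Fintype.equivFin G.E) e).isLt

lemma idx_inj {e f : G.E} (h : idx G e = idx G f) : e = f :=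
  (Fintype.equivFin G.E).injective (Fin.val_injective h)

/-- Lexicographic key of an edge: entry time, then edge index. -/
noncomputable def key (g : G.E → Fin (α + 1)) (e : G.E) : ℕ :=
  (g e : ℕ) * MM G + idx G e

lemma key_inj (g : G.E → Fin (α + 1)) {e f : G.E}
    (h : key G α g e = key G α g f) : e = f := by
  have h1 := idx_lt G e
  have h2 := idx_lt G f
  unfold key at h
  have : idx G e = idx G f := by
    have e1 : (key G α g e) % MM G = idx G e := by
      unfold key; rw [Nat.mul_comm, Nat.mul_add_mod]; exact Nat.mod_eq_of_lt h1
    have e2 : (key G α g f) % MM G = idx G f := by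
      unfold key; rw [Nat.mul_comm, Nat.mul_add_mod]; exact Nat.mod_eq_of_lt h2
    unfold key at e1 e2
    rw [← e1, ← e2, h]
  exact idx_inj G this

/-- The set of present edges (entry time < α; value α means absent). -/
noncomputable def Present (g : G.E → Fin (α + 1)) : Finset G.E :=
  Finset.univ.filter fun e => (g e : ℕ) < α

/-- Lexicographic prefix: present edges with key < m. -/
noncomputable def Pfx (g : G.E → Fin (α + 1)) (m : ℕ) : Finset G.E :=
  (Present G α g).filter fun e => key G α g e < m

/-- Level sets of the chain. -/
noncomputable def SSet (g : G.E → Fin (α + 1)) (k : ℕ) : Finset G.E :=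
  Finset.univ.filter fun e => (g e : ℕ) ≤ k

/-- The lexicographically greedy spanning forest. -/
noncomputable def TT (g : G.E → Fin (α + 1)) : Finset G.E :=
  (Present G α g).filter fun e => ¬ conn G e (Pfx G α g (key G α g e))

/-- The canonical representative of the fiber of `g`. -/
noncomputable def Phi (g : G.E → Fin (α + 1)) : G.E → Fin (α + 1) :=
  fun e => if e ∈ TT G α g then g e else Fin.last α

variable {G α}

lemma mem_Present {g : G.E → Fin (α + 1)} {e : G.E} :
    e ∈ Present G α g ↔ (g e : ℕ) < α := by simp [Present]

lemma mem_Pfx {g : G.E → Fin (α + 1)} {m : ℕ} {e : G.E} :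
    e ∈ Pfx G α g m ↔ (g e : ℕ) < α ∧ key G α g e < m := by simp [Pfx, mem_Present]

lemma mem_SSet {g : G.E → Fin (α + 1)} {k : ℕ} {e : G.E} :
    e ∈ SSet G α g k ↔ (g e : ℕ) ≤ k := by simp [SSet]

lemma mem_TT {g : G.E → Fin (α + 1)} {e : G.E} :
    e ∈ TT G α g ↔ ((g e : ℕ) < α ∧ ¬ conn G e (Pfx G α g (key G α g e))) := by
  simp [TT, mem_Present]

lemma key_def (g : G.E → Fin (α + 1)) (e : G.E) :
    key G α g e = (g e : ℕ) * MM G + idx G e := rfl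

lemma Phi_def (g : G.E → Fin (α + 1)) (e : G.E) :
    Phi G α g e = if e ∈ TT G α g then g e else Fin.last α := rfl

attribute [irreducible] idx key Pfx Present SSet TT Phi

lemma master (g : G.E → Fin (α + 1)) (T : Finset G.E)
    (hT1 : ∀ e ∈ T, (g e : ℕ) < α ∧
      ¬ conn G e (T.filter fun f => key G α g f < key G α g e))
    (hT2 : ∀ e, (g e : ℕ) < α → e ∉ T →
      conn G e (Pfx G α g (key G α g e)) ∨
        conn G e (T.filter fun f => key G α g f < key G α g e)) :
    ∀ m, cc G (Pfx G α g m) = cc G (Pfx G α g m ∩ T) ∧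
      bN G (Pfx G α g m) = ((Pfx G α g m) \ T).card := by
  intro m
  induction m with
  | zero =>
    have h0 : Pfx G α g 0 = ∅ := by
      ext e; simp [mem_Pfx]
    rw [h0]
    constructor
    · rw [Finset.empty_inter]
    · rw [Finset.empty_sdiff, Finset.card_empty, bN_eq, cc_empty]
      simp
  | succ m ih =>
    by_cases hex : ∃ e, (g e : ℕ) < α ∧ key G α g e = m
    · obtain ⟨e, hep, hek⟩ := hex
      have hins : Pfx G α g (m + 1) = insert e (Pfx G α g m) := by
        ext f
        rw [mem_Pfx, Finset.mem_insert, mem_Pfx]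
        constructor
        · rintro ⟨hf1, hf2⟩
          rcases Nat.lt_succ_iff_lt_or_eq.mp hf2 with h | h
          · exact Or.inr ⟨hf1, h⟩
          · exact Or.inl (key_inj G α g (h.trans hek.symm))
        · rintro (rfl | ⟨hf1, hf2⟩)
          · exact ⟨hep, by omega⟩
          · exact ⟨hf1, by omega⟩
      have henot : e ∉ Pfx G α g m := by
        rw [mem_Pfx]; omega
      have hTfil : T.filter (fun f => key G α g f < key G α g e) = Pfx G α g m ∩ T := by
        ext f
        rw [Finset.mem_filter, Finset.mem_inter, mem_Pfx, hek]
        constructor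
        · rintro ⟨hf1, hf2⟩
          exact ⟨⟨(hT1 f hf1).1, hf2⟩, hf1⟩
        · rintro ⟨⟨_, hf2⟩, hf3⟩
          exact ⟨hf3, hf2⟩
      rw [hins]
      by_cases heT : e ∈ T
      · -- tree edge: independent step
        have hnc2 : ¬ conn G e (Pfx G α g m ∩ T) := by
          rw [← hTfil]; exact (hT1 e heT).2
        have hnc1 : ¬ conn G e (Pfx G α g m) := by
          intro hc
          exact hnc2 (conn_of_cc_eq Finset.inter_subset_left ih.1.symm hc)
        have hi : insert e (Pfx G α g m) ∩ T = insert e (Pfx G α g m ∩ T) :=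
          Finset.insert_inter_of_mem heT
        have hd : insert e (Pfx G α g m) \ T = Pfx G α g m \ T := by
          ext f
          simp only [Finset.mem_sdiff, Finset.mem_insert]
          constructor
          · rintro ⟨rfl | hf, hfT⟩
            · exact absurd heT hfT
            · exact ⟨hf, hfT⟩
          · rintro ⟨hf, hfT⟩; exact ⟨Or.inr hf, hfT⟩
        constructor
        · rw [hi]
          have c1 := cc_insert_of_not_conn hnc1
          have c2 := cc_insert_of_not_conn hnc2
          omega
        · rw [hd, bN_insert_of_not_conn henot hnc1]
          exact ih.2
      · -- dependent edge
        have hc1 : conn G e (Pfx G α g m) := by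
          rcases hT2 e hep heT with h | h
          · rwa [hek] at h
          · refine conn_mono ?_ h
            rw [hTfil]
            exact Finset.inter_subset_left
        have hi : insert e (Pfx G α g m) ∩ T = Pfx G α g m ∩ T :=
          Finset.insert_inter_of_notMem heT
        have hd : insert e (Pfx G α g m) \ T = insert e (Pfx G α g m \ T) := by
          ext f
          simp only [Finset.mem_sdiff, Finset.mem_insert]
          constructor
          · rintro ⟨rfl | hf, hfT⟩
            · exact Or.inl rfl
            · exact Or.inr ⟨hf, hfT⟩
          · rintro (rfl | ⟨hf, hfT⟩)
            · exact ⟨Or.inl rfl, heT⟩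
            · exact ⟨Or.inr hf, hfT⟩
        constructor
        · rw [hi, cc_insert_of_conn hc1, ih.1]
        · rw [hd, bN_insert_of_conn henot hc1, ih.2,
            Finset.card_insert_of_notMem (fun hf => henot (Finset.mem_sdiff.mp hf).1)]
    · have heq : Pfx G α g (m + 1) = Pfx G α g m := by
        ext f
        rw [mem_Pfx, mem_Pfx]
        constructor
        · rintro ⟨h1, h2⟩
          refine ⟨h1, ?_⟩
          rcases Nat.lt_succ_iff_lt_or_eq.mp h2 with h | h
          · exact h
          · exact absurd ⟨f, h1, h⟩ hex
        · rintro ⟨h1, h2⟩; exact ⟨h1, by omega⟩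
      rw [heq]
      exact ih


lemma TT_subset_Present (g : G.E → Fin (α + 1)) : TT G α g ⊆ Present G α g := by
  intro e he
  rw [mem_TT] at he
  exact mem_Present.mpr he.1

lemma TT_hT1 (g : G.E → Fin (α + 1)) :
    ∀ e ∈ TT G α g, (g e : ℕ) < α ∧
      ¬ conn G e ((TT G α g).filter fun f => key G α g f < key G α g e) := by
  intro e he
  have h := mem_TT.mp he
  refine ⟨h.1, fun hc => h.2 (conn_mono ?_ hc)⟩
  intro f hf
  rw [Finset.mem_filter] at hf
  rw [mem_Pfx]
  exact ⟨(mem_TT.mp hf.1).1, hf.2⟩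

lemma TT_hT2 (g : G.E → Fin (α + 1)) :
    ∀ e, (g e : ℕ) < α → e ∉ TT G α g →
      conn G e (Pfx G α g (key G α g e)) ∨
        conn G e ((TT G α g).filter fun f => key G α g f < key G α g e) := by
  intro e hp hne
  left
  by_contra hc
  exact hne (mem_TT.mpr ⟨hp, hc⟩)

lemma master_TT (g : G.E → Fin (α + 1)) :
    ∀ m, cc G (Pfx G α g m) = cc G (Pfx G α g m ∩ TT G α g) ∧
      bN G (Pfx G α g m) = ((Pfx G α g m) \ TT G α g).card :=
  master g (TT G α g) (TT_hT1 g) (TT_hT2 g)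

lemma Pfx_top (g : G.E → Fin (α + 1)) :
    Pfx G α g ((α + 1) * MM G) = Present G α g := by
  ext e
  rw [mem_Pfx, mem_Present]
  have h1 : idx G e < MM G := idx_lt G e
  have h2 : (g e : ℕ) ≤ α := Nat.lt_succ_iff.mp (g e).isLt
  constructor
  · rintro ⟨h, _⟩; exact h
  · intro h
    refine ⟨h, ?_⟩
    rw [key_def]
    have : (g e : ℕ) * MM G ≤ α * MM G := Nat.mul_le_mul_right _ h2
    have h3 : (α + 1) * MM G = α * MM G + MM G := by ring
    omega

lemma SSet_eq_Pfx (g : G.E → Fin (α + 1)) {k : ℕ} (hk : k < α) :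
    SSet G α g k = Pfx G α g ((k + 1) * MM G) := by
  ext e
  rw [mem_SSet, mem_Pfx]
  have h1 : idx G e < MM G := idx_lt G e
  have hsucc : (k + 1) * MM G = k * MM G + MM G := by ring
  constructor
  · intro h
    refine ⟨by omega, ?_⟩
    rw [key_def]
    have : (g e : ℕ) * MM G ≤ k * MM G := Nat.mul_le_mul_right _ h
    omega
  · rintro ⟨h2, h3⟩
    rw [key_def] at h3
    by_contra hgt
    have : k + 1 ≤ (g e : ℕ) := by omega
    have h4 : (k + 1) * MM G ≤ (g e : ℕ) * MM G := Nat.mul_le_mul_right _ this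
    omega

lemma cc_present_eq_cc_TT (g : G.E → Fin (α + 1)) :
    cc G (Present G α g) = cc G (TT G α g) := by
  have h := (master_TT g ((α + 1) * MM G)).1
  rw [Pfx_top] at h
  rwa [Finset.inter_eq_right.mpr (TT_subset_Present g)] at h

lemma bN_SSet_eq (g : G.E → Fin (α + 1)) {k : ℕ} (hk : k < α) :
    bN G (SSet G α g k) = ((SSet G α g k) \ TT G α g).card := by
  have h := (master_TT g ((k + 1) * MM G)).2
  rwa [← SSet_eq_Pfx g hk] at h

lemma TT_eq_of_hyps (g : G.E → Fin (α + 1)) (T : Finset G.E)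
    (hT1 : ∀ e ∈ T, (g e : ℕ) < α ∧
      ¬ conn G e (T.filter fun f => key G α g f < key G α g e))
    (hT2 : ∀ e, (g e : ℕ) < α → e ∉ T →
      conn G e (Pfx G α g (key G α g e)) ∨
        conn G e (T.filter fun f => key G α g f < key G α g e)) :
    TT G α g = T := by
  have hTfil : ∀ e ∈ T, T.filter (fun f => key G α g f < key G α g e)
      = Pfx G α g (key G α g e) ∩ T := by
    intro e _
    ext f
    rw [Finset.mem_filter, Finset.mem_inter, mem_Pfx]
    constructor
    · rintro ⟨hf1, hf2⟩
      exact ⟨⟨(hT1 f hf1).1, hf2⟩, hf1⟩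
    · rintro ⟨⟨_, h2⟩, h3⟩
      exact ⟨h3, h2⟩
  ext e
  rw [mem_TT]
  constructor
  · rintro ⟨hp, hnc⟩
    by_contra heT
    rcases hT2 e hp heT with h | h
    · exact hnc h
    · refine hnc (conn_mono ?_ h)
      intro f hf
      rw [Finset.mem_filter] at hf
      rw [mem_Pfx]
      exact ⟨(hT1 f hf.1).1, hf.2⟩
  · intro heT
    refine ⟨(hT1 e heT).1, fun hc => ?_⟩
    have htr : conn G e (Pfx G α g (key G α g e) ∩ T) :=
      conn_of_cc_eq Finset.inter_subset_left
        ((master g T hT1 hT2 (key G α g e)).1).symm hc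
    rw [← hTfil e heT] at htr
    exact (hT1 e heT).2 htr

lemma Present_Phi (g : G.E → Fin (α + 1)) :
    Present G α (Phi G α g) = TT G α g := by
  ext e
  rw [mem_Present, Phi_def]
  by_cases h : e ∈ TT G α g
  · simp only [h, if_true, iff_true]
    exact (mem_TT.mp h).1
  · simp only [h, if_false, iff_false, Fin.val_last]
    omega

lemma Phi_eq_on_TT (g : G.E → Fin (α + 1)) {e : G.E} (he : e ∈ TT G α g) :
    Phi G α g e = g e := by
  rw [Phi_def, if_pos he]

lemma Phi_eq_off_TT (g : G.E → Fin (α + 1)) {e : G.E} (he : e ∉ TT G α g) :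
    Phi G α g e = Fin.last α := by
  rw [Phi_def, if_neg he]


variable (G α) in
/-- The per-edge sets of allowed entry times over the fiber of `g₀`. -/
noncomputable def ASet (g₀ : G.E → Fin (α + 1)) : G.E → Finset (Fin (α + 1)) :=
  fun e =>
    if e ∈ TT G α g₀ then {Phi G α g₀ e}
    else Finset.univ.filter (fun v => (v : ℕ) = α ∨ ((v : ℕ) < α ∧
      conn G e ((TT G α g₀).filter
        fun f => key G α g₀ f < (v : ℕ) * MM G + idx G e)))

lemma mem_ASet_of_mem_TT {g₀ : G.E → Fin (α + 1)} {e : G.E} (he : e ∈ TT G α g₀)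
    {v : Fin (α + 1)} : v ∈ ASet G α g₀ e ↔ v = Phi G α g₀ e := by
  unfold ASet
  rw [if_pos he, Finset.mem_singleton]

lemma mem_ASet_of_not_mem_TT {g₀ : G.E → Fin (α + 1)} {e : G.E} (he : e ∉ TT G α g₀)
    {v : Fin (α + 1)} : v ∈ ASet G α g₀ e ↔ ((v : ℕ) = α ∨ ((v : ℕ) < α ∧
      conn G e ((TT G α g₀).filter
        fun f => key G α g₀ f < (v : ℕ) * MM G + idx G e))) := by
  unfold ASet
  rw [if_neg he, Finset.mem_filter]
  simp only [Finset.mem_univ, true_and]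

lemma fiber_characterization (hne : Nonempty G.V) (g₀ : G.E → Fin (α + 1))
    (hcon : (G.restrictE (Present G α g₀)).Connected) :
    (Finset.univ.filter (fun g : G.E → Fin (α + 1) =>
        (G.restrictE (Present G α g)).Connected ∧ Phi G α g = Phi G α g₀))
      = Fintype.piFinset (ASet G α g₀) := by
  ext g
  rw [Finset.mem_filter, Fintype.mem_piFinset]
  simp only [Finset.mem_univ, true_and]
  constructor
  · rintro ⟨hOKg, hPhi⟩
    have hTT : TT G α g = TT G α g₀ := by
      rw [← Present_Phi g, hPhi, Present_Phi g₀]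
    intro e
    by_cases heT : e ∈ TT G α g₀
    · rw [mem_ASet_of_mem_TT heT, ← hPhi]
      exact (Phi_eq_on_TT g (hTT ▸ heT)).symm
    · rw [mem_ASet_of_not_mem_TT heT]
      by_cases hpres : (g e : ℕ) < α
      · right
        refine ⟨hpres, ?_⟩
        have henT : e ∉ TT G α g := fun h => heT (hTT ▸ h)
        have hconn : conn G e (Pfx G α g (key G α g e)) := by
          by_contra hc
          exact henT (mem_TT.mpr ⟨hpres, hc⟩)
        have htrans : conn G e (Pfx G α g (key G α g e) ∩ TT G α g) :=
          conn_of_cc_eq Finset.inter_subset_left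
            ((master_TT g (key G α g e)).1).symm hconn
        have hagree : ∀ f ∈ TT G α g₀, g f = g₀ f := by
          intro f hf
          have h1 : Phi G α g f = g f := Phi_eq_on_TT g (hTT ▸ hf)
          have h2 : Phi G α g₀ f = g₀ f := Phi_eq_on_TT g₀ hf
          rw [← h1, hPhi, h2]
        have hset : Pfx G α g (key G α g e) ∩ TT G α g
            = (TT G α g₀).filter
              (fun f => key G α g₀ f < (g e : ℕ) * MM G + idx G e) := by
          ext f
          rw [Finset.mem_inter, mem_Pfx, Finset.mem_filter, hTT]
          constructor
          · rintro ⟨⟨h1, h2⟩, h3⟩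
            refine ⟨h3, ?_⟩
            rw [key_def, key_def, hagree f h3] at h2
            rw [key_def]
            exact h2
          · rintro ⟨h1, h2⟩
            have hfp : (g f : ℕ) < α := by
              rw [hagree f h1]
              exact (mem_TT.mp h1).1
            refine ⟨⟨hfp, ?_⟩, h1⟩
            rw [key_def, key_def, hagree f h1]
            rw [key_def] at h2
            exact h2
        rwa [hset] at htrans
      · left
        have := (g e).isLt
        omega
  · intro hA
    set T := TT G α g₀ with hT
    have hagree : ∀ f ∈ T, g f = g₀ f := by
      intro f hf
      have := (mem_ASet_of_mem_TT hf).mp (hA f)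
      rw [this, Phi_eq_on_TT g₀ hf]
    have hkey : ∀ f ∈ T, key G α g f = key G α g₀ f := by
      intro f hf
      rw [key_def, key_def, hagree f hf]
    have hfil : ∀ e : G.E, T.filter (fun f => key G α g f < key G α g e)
        = T.filter (fun f => key G α g₀ f < key G α g e) := by
      intro e
      apply Finset.filter_congr
      intro f hf
      rw [hkey f hf]
    have hT1 : ∀ e ∈ T, (g e : ℕ) < α ∧
        ¬ conn G e (T.filter fun f => key G α g f < key G α g e) := by
      intro e heT
      have hpres : (g e : ℕ) < α := by
        rw [hagree e heT]
        exact (mem_TT.mp heT).1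
      refine ⟨hpres, fun hc => ?_⟩
      have hnc : ¬ conn G e (Pfx G α g₀ (key G α g₀ e)) := (mem_TT.mp heT).2
      refine hnc (conn_mono ?_ ((hfil e) ▸ hc))
      intro f hf
      rw [Finset.mem_filter] at hf
      rw [mem_Pfx]
      refine ⟨(mem_TT.mp hf.1).1, ?_⟩
      rw [← hkey e heT]
      exact hf.2
    have hT2 : ∀ e, (g e : ℕ) < α → e ∉ T →
        conn G e (Pfx G α g (key G α g e)) ∨
          conn G e (T.filter fun f => key G α g f < key G α g e) := by
      intro e hpres heT
      right
      have := (mem_ASet_of_not_mem_TT heT).mp (hA e)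
      rcases this with h | ⟨_, hconn⟩
      · omega
      · rw [hfil e, key_def]
        exact hconn
    have hTTg : TT G α g = T := TT_eq_of_hyps g T hT1 hT2
    have hPhi : Phi G α g = Phi G α g₀ := by
      funext e
      by_cases heT : e ∈ T
      · rw [Phi_eq_on_TT g (hTTg ▸ heT), hagree e heT, Phi_eq_on_TT g₀ heT]
      · rw [Phi_eq_off_TT g (fun h => heT (hTTg ▸ h)), Phi_eq_off_TT g₀ heT]
    refine ⟨?_, hPhi⟩
    rw [connected_restrict_iff hne]
    rw [cc_present_eq_cc_TT g, hTTg, ← cc_present_eq_cc_TT g₀]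
    exact (connected_restrict_iff hne).mp hcon


lemma card_K_filter {v : ℕ} (hv : v < α) :
    (Finset.univ.filter fun k : Fin α => k.1 + 1 < α ∧ v ≤ k.1).card = α - 1 - v := by
  rw [← Nat.card_Ico v (α - 1)]
  apply Finset.card_nbij' (i := fun k => k.1)
    (j := fun m => if h : m < α then (⟨m, h⟩ : Fin α) else ⟨0, by omega⟩)
  · intro k hk
    rw [Finset.mem_coe, Finset.mem_filter] at hk
    rw [Finset.mem_coe, Finset.mem_Ico]
    dsimp only
    omega
  · intro m hm
    rw [Finset.mem_coe, Finset.mem_Ico] at hm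
    dsimp only
    rw [dif_pos (by omega : m < α), Finset.mem_coe, Finset.mem_filter]
    refine ⟨Finset.mem_univ _, ?_, ?_⟩ <;> simp only [Fin.val_mk] <;> omega
  · intro k hk
    simp only [dif_pos k.isLt]
  · intro m hm
    rw [Finset.mem_coe, Finset.mem_Ico] at hm
    dsimp only
    rw [dif_pos (by omega : m < α)]

lemma weight_factor (hα : 0 < α) (g : G.E → Fin (α + 1)) :
    ((X : Polynomial ℤ) - 1) ^ (bN G (SSet G α g (α - 1))) *
      (X : Polynomial ℤ) ^ (∑ k ∈ Finset.univ.filter (fun k : Fin α => k.1 + 1 < α),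
        bN G (SSet G α g k.1)) =
    ∏ e : G.E, (if e ∈ TT G α g then (1 : Polynomial ℤ)
      else (if (g e : ℕ) < α then ((X : Polynomial ℤ) - 1) * X ^ (α - 1 - (g e : ℕ))
        else 1)) := by
  classical
  set T := TT G α g with hT
  -- rewrite the Betti numbers
  have hbk : ∀ k : Fin α, k.1 + 1 < α →
      bN G (SSet G α g k.1) = ((SSet G α g k.1) \ T).card := by
    intro k hk
    exact bN_SSet_eq g (by omega)
  have hbtop : bN G (SSet G α g (α - 1)) = ((SSet G α g (α - 1)) \ T).card :=
    bN_SSet_eq g (by omega)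
  rw [hbtop, Finset.sum_congr rfl (fun k hk => hbk k (Finset.mem_filter.mp hk).2)]
  -- first factor as a product over edges
  have hfac1 : ((X : Polynomial ℤ) - 1) ^ ((SSet G α g (α - 1)) \ T).card
      = ∏ e : G.E, (if e ∈ (SSet G α g (α - 1)) \ T then ((X : Polynomial ℤ) - 1)
          else 1) := by
    rw [Finset.prod_ite_mem, Finset.univ_inter, Finset.prod_const]
  -- second factor as a double product
  have hfac2 : (X : Polynomial ℤ) ^ (∑ k ∈ Finset.univ.filter
        (fun k : Fin α => k.1 + 1 < α), ((SSet G α g k.1) \ T).card)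
      = ∏ e : G.E, (X : Polynomial ℤ) ^
          ((Finset.univ.filter fun k : Fin α => k.1 + 1 < α ∧ (g e : ℕ) ≤ k.1 ∧
            e ∉ T).card) := by
    rw [← Finset.prod_pow_eq_pow_sum]
    have step : ∀ k ∈ Finset.univ.filter (fun k : Fin α => k.1 + 1 < α),
        (X : Polynomial ℤ) ^ ((SSet G α g k.1) \ T).card
          = ∏ e : G.E, (if e ∈ (SSet G α g k.1) \ T then (X : Polynomial ℤ) else 1) := by
      intro k _
      rw [Finset.prod_ite_mem, Finset.univ_inter, Finset.prod_const]
    rw [Finset.prod_congr rfl step, Finset.prod_comm]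
    apply Finset.prod_congr rfl
    intro e _
    rw [Finset.prod_ite, Finset.prod_const, Finset.prod_const_one, mul_one]
    congr 1
    rw [Finset.filter_filter]
    apply Finset.card_nbij' (i := fun k => k) (j := fun k => k)
    · intro k hk
      rw [Finset.mem_coe, Finset.mem_filter] at hk ⊢
      obtain ⟨h1, h2, h3⟩ := hk
      rw [Finset.mem_sdiff, mem_SSet] at h3
      exact ⟨h1, h2, h3.1, h3.2⟩
    · intro k hk
      rw [Finset.mem_coe, Finset.mem_filter] at hk ⊢
      obtain ⟨h1, h2, h3, h4⟩ := hk
      exact ⟨h1, h2, Finset.mem_sdiff.mpr ⟨mem_SSet.mpr h3, h4⟩⟩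
    · intro k _; rfl
    · intro k _; rfl
  rw [hfac1, hfac2, ← Finset.prod_mul_distrib]
  apply Finset.prod_congr rfl
  intro e _
  by_cases heT : e ∈ T
  · rw [if_pos heT]
    have h1 : e ∉ (SSet G α g (α - 1)) \ T := fun h => (Finset.mem_sdiff.mp h).2 heT
    rw [if_neg h1]
    have h2 : (Finset.univ.filter fun k : Fin α =>
        k.1 + 1 < α ∧ (g e : ℕ) ≤ k.1 ∧ e ∉ T) = ∅ := by
      apply Finset.filter_false_of_mem
      intro k _
      rintro ⟨_, _, h⟩
      exact h heT
    rw [h2, Finset.card_empty, pow_zero, one_mul]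
  · rw [if_neg heT]
    by_cases hpres : (g e : ℕ) < α
    · rw [if_pos hpres]
      have h1 : e ∈ (SSet G α g (α - 1)) \ T :=
        Finset.mem_sdiff.mpr ⟨mem_SSet.mpr (by omega), heT⟩
      rw [if_pos h1]
      congr 1
      have heq : (Finset.univ.filter fun k : Fin α =>
          k.1 + 1 < α ∧ (g e : ℕ) ≤ k.1 ∧ e ∉ T)
          = (Finset.univ.filter fun k : Fin α => k.1 + 1 < α ∧ (g e : ℕ) ≤ k.1) := by
        apply Finset.filter_congr
        intro k _
        constructor
        · rintro ⟨h2, h3, _⟩; exact ⟨h2, h3⟩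
        · rintro ⟨h2, h3⟩; exact ⟨h2, h3, heT⟩
      rw [heq, card_K_filter hpres]
    · rw [if_neg hpres]
      have h1 : e ∉ (SSet G α g (α - 1)) \ T := by
        rw [Finset.mem_sdiff, mem_SSet]
        rintro ⟨h, _⟩
        omega
      rw [if_neg h1]
      have h2 : (Finset.univ.filter fun k : Fin α =>
          k.1 + 1 < α ∧ (g e : ℕ) ≤ k.1 ∧ e ∉ T) = ∅ := by
        apply Finset.filter_false_of_mem
        intro k hk
        rintro ⟨hlt, hle, _⟩
        have := k.isLt
        omega
      rw [h2, Finset.card_empty, pow_zero, one_mul]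


lemma per_edge_sum (g₀ : G.E → Fin (α + 1)) (e : G.E) :
    ∃ c : ℕ, (∑ v ∈ ASet G α g₀ e,
      (if e ∈ TT G α g₀ then (1 : Polynomial ℤ)
        else (if (v : ℕ) < α then ((X : Polynomial ℤ) - 1) * X ^ (α - 1 - (v : ℕ))
          else 1))) = (X : Polynomial ℤ) ^ c := by
  classical
  by_cases heT : e ∈ TT G α g₀
  · refine ⟨0, ?_⟩
    have hA : ASet G α g₀ e = {Phi G α g₀ e} := by
      unfold ASet; rw [if_pos heT]
    rw [hA, Finset.sum_singleton, if_pos heT, pow_zero]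
  · -- split off the `absent` element
    have hsplit := Finset.sum_filter_add_sum_filter_not (ASet G α g₀ e)
      (fun v : Fin (α + 1) => (v : ℕ) < α)
      (fun v => (if e ∈ TT G α g₀ then (1 : Polynomial ℤ)
        else (if (v : ℕ) < α then ((X : Polynomial ℤ) - 1) * X ^ (α - 1 - (v : ℕ))
          else 1)))
    have hlast : (ASet G α g₀ e).filter (fun v : Fin (α + 1) => ¬ ((v : ℕ) < α)) = {Fin.last α} := by
      ext v
      rw [Finset.mem_filter, Finset.mem_singleton]
      constructor
      · rintro ⟨_, hv⟩
        have := v.isLt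
        apply Fin.ext
        simp only [Fin.val_last]
        omega
      · rintro rfl
        refine ⟨?_, by simp⟩
        rw [mem_ASet_of_not_mem_TT heT]
        left
        simp
    set J := (ASet G α g₀ e).filter (fun v : Fin (α + 1) => (v : ℕ) < α) with hJ
    have hsum2 : ∑ v ∈ (ASet G α g₀ e).filter (fun v : Fin (α + 1) => ¬ ((v : ℕ) < α)),
        (if e ∈ TT G α g₀ then (1 : Polynomial ℤ)
          else (if (v : ℕ) < α then ((X : Polynomial ℤ) - 1) * X ^ (α - 1 - (v : ℕ))
            else 1)) = 1 := by
      rw [hlast, Finset.sum_singleton, if_neg heT, if_neg (by simp)]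
    rcases Finset.eq_empty_or_nonempty J with hJe | hJne
    · refine ⟨0, ?_⟩
      rw [← hsplit, hJe, Finset.sum_empty, hsum2, zero_add, pow_zero]
    · -- κ := minimal entry time in J
      obtain ⟨v₀, hv₀⟩ := hJne
      set κ := ((J.image Fin.val).min' ⟨(v₀ : ℕ), Finset.mem_image_of_mem _ hv₀⟩) with hκ
      obtain ⟨vκ, hvκJ, hvκ⟩ := Finset.mem_image.mp
        ((J.image Fin.val).min'_mem ⟨(v₀ : ℕ), Finset.mem_image_of_mem _ hv₀⟩)
      have hκlt : κ < α := by
        rw [hκ, ← hvκ]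
        exact (Finset.mem_filter.mp hvκJ).2
      have hPκ : conn G e ((TT G α g₀).filter
          fun f => key G α g₀ f < κ * MM G + idx G e) := by
        have := (mem_ASet_of_not_mem_TT heT).mp (Finset.mem_filter.mp hvκJ).1
        rcases this with h | ⟨_, h⟩
        · have := (Finset.mem_filter.mp hvκJ).2; omega
        · rwa [hvκ] at h
      have hJchar : ∀ v : Fin (α + 1), v ∈ J ↔ (κ ≤ (v : ℕ) ∧ (v : ℕ) < α) := by
        intro v
        constructor
        · intro hv
          refine ⟨?_, (Finset.mem_filter.mp hv).2⟩
          exact Finset.min'_le _ _ (Finset.mem_image_of_mem _ hv)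
        · rintro ⟨h1, h2⟩
          rw [hJ, Finset.mem_filter]
          refine ⟨?_, h2⟩
          rw [mem_ASet_of_not_mem_TT heT]
          right
          refine ⟨h2, conn_mono ?_ hPκ⟩
          have hmul : κ * MM G ≤ (v : ℕ) * MM G := Nat.mul_le_mul_right _ h1
          refine Finset.monotone_filter_right _ ?_
          intro f hf
          omega
      refine ⟨α - κ, ?_⟩
      rw [← hsplit, hsum2]
      have hsum1 : ∑ v ∈ J, (if e ∈ TT G α g₀ then (1 : Polynomial ℤ)
          else (if (v : ℕ) < α then ((X : Polynomial ℤ) - 1) * X ^ (α - 1 - (v : ℕ))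
            else 1))
          = ∑ m ∈ Finset.Ico κ α, ((X : Polynomial ℤ) - 1) * X ^ (α - 1 - m) := by
        refine Finset.sum_nbij' (fun v => (v : ℕ))
          (fun m => if h : m < α + 1 then (⟨m, h⟩ : Fin (α + 1)) else Fin.last α)
          ?_ ?_ ?_ ?_ ?_
        · intro v hv
          rw [Finset.mem_Ico]
          exact ((hJchar v).mp hv).imp id id
        · intro m hm
          rw [Finset.mem_Ico] at hm
          rw [dif_pos (by omega : m < α + 1), hJchar]
          constructor <;> simp only [Fin.val_mk] <;> omega
        · intro v hv
          simp only [dif_pos v.isLt]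
        · intro m hm
          rw [Finset.mem_Ico] at hm
          rw [dif_pos (by omega : m < α + 1)]
        · intro v hv
          rw [if_neg heT, if_pos ((hJchar v).mp hv).2]
      have hre : ∑ m ∈ Finset.Ico κ α, ((X : Polynomial ℤ) - 1) * X ^ (α - 1 - m)
          = ∑ i ∈ Finset.range (α - κ), ((X : Polynomial ℤ) - 1) * X ^ i := by
        refine Finset.sum_nbij' (fun m => α - 1 - m) (fun i => α - 1 - i) ?_ ?_ ?_ ?_ ?_
        · intro m hm
          rw [Finset.mem_Ico] at hm
          rw [Finset.mem_range]
          omega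
        · intro i hi
          rw [Finset.mem_range] at hi
          rw [Finset.mem_Ico]
          omega
        · intro m hm
          rw [Finset.mem_Ico] at hm
          omega
        · intro i hi
          rw [Finset.mem_range] at hi
          omega
        · intro m hm
          rfl
      rw [hsum1, hre]
      have hgeom : ∑ i ∈ Finset.range (α - κ), ((X : Polynomial ℤ) - 1) * X ^ i
          = X ^ (α - κ) - 1 := by
        rw [← Finset.mul_sum, mul_comm, geom_sum_mul]
      rw [hgeom]
      ring


variable (G α) in
/-- The per-edge weight function. -/
noncomputable def wf (T : Finset G.E) (e : G.E) (v : Fin (α + 1)) : Polynomial ℤ :=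
  if e ∈ T then 1 else if (v : ℕ) < α then ((X : Polynomial ℤ) - 1) * X ^ (α - 1 - (v : ℕ)) else 1

lemma weight_factor' (hα : 0 < α) (g : G.E → Fin (α + 1)) :
    ((X : Polynomial ℤ) - 1) ^ (bN G (SSet G α g (α - 1))) *
      (X : Polynomial ℤ) ^ (∑ k ∈ Finset.univ.filter (fun k : Fin α => k.1 + 1 < α),
        bN G (SSet G α g k.1)) =
    ∏ e : G.E, wf G α (TT G α g) e (g e) := by
  rw [weight_factor hα g]
  rfl

lemma per_edge_sum' (g₀ : G.E → Fin (α + 1)) (e : G.E) :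
    ∃ c : ℕ, (∑ v ∈ ASet G α g₀ e, wf G α (TT G α g₀) e v) = (X : Polynomial ℤ) ^ c := by
  obtain ⟨c, hc⟩ := per_edge_sum g₀ e
  exact ⟨c, by rw [← hc]; rfl⟩

lemma fiber_sum (hα : 0 < α) (hne : Nonempty G.V) (g₀ : G.E → Fin (α + 1))
    (hcon : (G.restrictE (Present G α g₀)).Connected) :
    ∃ c : ℕ,
      (∑ g ∈ Finset.univ.filter (fun g : G.E → Fin (α + 1) =>
          (G.restrictE (Present G α g)).Connected ∧ Phi G α g = Phi G α g₀),
        ((X : Polynomial ℤ) - 1) ^ (bN G (SSet G α g (α - 1))) *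
          (X : Polynomial ℤ) ^ (∑ k ∈ Finset.univ.filter (fun k : Fin α => k.1 + 1 < α),
            bN G (SSet G α g k.1))) = (X : Polynomial ℤ) ^ c := by
  classical
  rw [fiber_characterization hne g₀ hcon]
  have hW : ∀ g ∈ Fintype.piFinset (ASet G α g₀),
      ((X : Polynomial ℤ) - 1) ^ (bN G (SSet G α g (α - 1))) *
        (X : Polynomial ℤ) ^ (∑ k ∈ Finset.univ.filter (fun k : Fin α => k.1 + 1 < α),
          bN G (SSet G α g k.1))
        = ∏ e : G.E, wf G α (TT G α g₀) e (g e) := by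
    intro g hg
    have hmem : g ∈ Finset.univ.filter (fun g : G.E → Fin (α + 1) =>
        (G.restrictE (Present G α g)).Connected ∧ Phi G α g = Phi G α g₀) := by
      rw [fiber_characterization hne g₀ hcon]; exact hg
    rw [Finset.mem_filter] at hmem
    obtain ⟨-, -, hPhi⟩ := hmem
    have hTT : TT G α g = TT G α g₀ := by
      rw [← Present_Phi g, hPhi, Present_Phi g₀]
    rw [weight_factor' hα g, hTT]
  rw [Finset.sum_congr rfl hW, ← Finset.prod_univ_sum]
  choose c hc using per_edge_sum' (G := G) (α := α) g₀
  rw [Finset.prod_congr rfl (fun e _ => hc e)]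
  exact ⟨∑ e, c e, Finset.prod_pow_eq_pow_sum _ _ _⟩


lemma card_fin_lt (hα : 0 < α) {j : ℕ} (hj : j ≤ α) :
    (Finset.univ.filter fun l : Fin α => l.1 < j).card = j := by
  conv_rhs => rw [← Finset.card_range j]
  refine Finset.card_nbij' (fun l => l.1)
    (fun m => if h : m < α then (⟨m, h⟩ : Fin α) else ⟨0, hα⟩) ?_ ?_ ?_ ?_
  · intro l hl
    rw [Finset.mem_coe, Finset.mem_filter] at hl
    rw [Finset.mem_coe, Finset.mem_range]
    exact hl.2
  · intro m hm
    rw [Finset.mem_coe, Finset.mem_range] at hm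
    dsimp only
    rw [dif_pos (by omega : m < α), Finset.mem_coe, Finset.mem_filter]
    exact ⟨Finset.mem_univ _, by simp only [Fin.val_mk]; omega⟩
  · intro l hl
    simp only [dif_pos l.isLt]
  · intro m hm
    rw [Finset.mem_coe, Finset.mem_range] at hm
    dsimp only
    rw [dif_pos (by omega : m < α)]

lemma SSet_top (hα : 0 < α) (g : G.E → Fin (α + 1)) :
    SSet G α g (α - 1) = Present G α g := by
  ext e
  rw [mem_SSet, mem_Present]
  omega

variable (G α) in
/-- Entry time function encoding a chain of edge sets. -/
noncomputable def gOf (c : Fin α → Finset G.E) : G.E → Fin (α + 1) :=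
  fun e => ⟨(Finset.univ.filter fun k : Fin α => e ∉ c k).card, by
    have h := Finset.card_filter_le Finset.univ (fun k : Fin α => e ∉ c k)
    simp only [Finset.card_univ, Fintype.card_fin] at h
    omega⟩

lemma gOf_le_iff (hα : 0 < α) {c : Fin α → Finset G.E}
    (hchain : ∀ k l : Fin α, k ≤ l → c k ⊆ c l) (e : G.E) (k : Fin α) :
    e ∈ c k ↔ ((gOf G α c) e : ℕ) ≤ k.1 := by
  constructor
  · intro he
    show (Finset.univ.filter fun l : Fin α => e ∉ c l).card ≤ k.1
    have hsub : (Finset.univ.filter fun l : Fin α => e ∉ c l)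
        ⊆ (Finset.univ.filter fun l : Fin α => l.1 < k.1) := by
      intro l hl
      rw [Finset.mem_filter] at hl ⊢
      refine ⟨Finset.mem_univ _, ?_⟩
      by_contra hlt
      have hkl : k ≤ l := by
        rw [Fin.le_def]; omega
      exact hl.2 (hchain k l hkl he)
    calc (Finset.univ.filter fun l : Fin α => e ∉ c l).card
        ≤ (Finset.univ.filter fun l : Fin α => l.1 < k.1).card :=
          Finset.card_le_card hsub
      _ = k.1 := card_fin_lt hα (by omega)
  · intro hle
    by_contra he
    have hsub : (Finset.univ.filter fun l : Fin α => l.1 < k.1 + 1)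
        ⊆ (Finset.univ.filter fun l : Fin α => e ∉ c l) := by
      intro l hl
      rw [Finset.mem_filter] at hl ⊢
      refine ⟨Finset.mem_univ _, fun hecl => he ?_⟩
      have hlk : l ≤ k := by
        rw [Fin.le_def]; omega
      exact hchain l k hlk hecl
    have hcard := Finset.card_le_card hsub
    rw [card_fin_lt hα (by have := k.isLt; omega)] at hcard
    have : ((gOf G α c) e : ℕ) = (Finset.univ.filter fun l : Fin α => e ∉ c l).card := rfl
    omega

end Comb

end TKP


open TKP

open Polynomial

/-- Let `Q` be a connected graph and `α ≥ 1`.  The toric Kac polynomial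
in depth `α`,
`A_{Q,1,α}(q) = Σ_{E_1 ⊆ … ⊆ E_α ⊆ Q_1, Q|_{E_α} connected}
   (q−1)^{b(Q|_{E_α})} · q^{Σ_{k=1}^{α−1} b(Q|_{E_k})}`,
where the sum runs over increasing chains of edge subsets whose top subgraph is
(spanning) connected, has non-negative integer coefficients. -/
theorem toric_kac_polynomial_nonneg (G : Multigraph) [Fintype G.V] [Fintype G.E]
    [DecidableEq G.E] (hG : G.Connected) (α : ℕ) (hα : 0 < α) :
    ∀ n : ℕ, 0 ≤
      (∑ᶠ c : {c : Fin α → Finset G.E //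
          (∀ k l : Fin α, k ≤ l → c k ⊆ c l) ∧
          (G.restrictE (c ⟨α - 1, by omega⟩)).Connected},
        ((X : Polynomial ℤ) - 1) ^ (G.restrictE (c.1 ⟨α - 1, by omega⟩)).bettiNat *
          (X : Polynomial ℤ) ^
            (∑ k ∈ Finset.univ.filter (fun k : Fin α => k.1 + 1 < α),
              (G.restrictE (c.1 k)).bettiNat)).coeff n := by
  classical
  intro n
  have hne : Nonempty G.V := hG.1
  haveI : Fintype {c : Fin α → Finset G.E //
      (∀ k l : Fin α, k ≤ l → c k ⊆ c l) ∧
      (G.restrictE (c ⟨α - 1, by omega⟩)).Connected} := Fintype.ofFinite _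
  rw [finsum_eq_sum_of_fintype]
  -- reindex from chains to entry-time functions
  have hreindex : (∑ c : {c : Fin α → Finset G.E //
      (∀ k l : Fin α, k ≤ l → c k ⊆ c l) ∧
      (G.restrictE (c ⟨α - 1, Nat.sub_lt hα Nat.one_pos⟩)).Connected},
        ((X : Polynomial ℤ) - 1) ^
          (G.restrictE (c.1 ⟨α - 1, Nat.sub_lt hα Nat.one_pos⟩)).bettiNat *
          (X : Polynomial ℤ) ^
            (∑ k ∈ Finset.univ.filter (fun k : Fin α => k.1 + 1 < α),
              (G.restrictE (c.1 k)).bettiNat))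
      = ∑ g ∈ Finset.univ.filter (fun g : G.E → Fin (α + 1) =>
            (G.restrictE (Present G α g)).Connected),
          ((X : Polynomial ℤ) - 1) ^ (bN G (SSet G α g (α - 1))) *
            (X : Polynomial ℤ) ^ (∑ k ∈ Finset.univ.filter
              (fun k : Fin α => k.1 + 1 < α), bN G (SSet G α g k.1)) := by
    refine Finset.sum_bij' (fun c _ => gOf G α c.1)
      (fun g hg => ⟨fun k => SSet G α g k.1, ?_, ?_⟩) ?_ ?_ ?_ ?_ ?_
    · intro k l hkl
      intro e he
      rw [mem_SSet] at he ⊢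
      rw [Fin.le_def] at hkl
      omega
    · rw [Finset.mem_filter] at hg
      dsimp only
      rw [SSet_top hα]
      exact hg.2
    · intro c _
      rw [Finset.mem_filter]
      refine ⟨Finset.mem_univ _, ?_⟩
      have hpres : Present G α (gOf G α c.1) = c.1 ⟨α - 1, by omega⟩ := by
        ext e
        rw [mem_Present, gOf_le_iff hα c.2.1 e ⟨α - 1, by omega⟩]
        simp only [Fin.val_mk]
        omega
      rw [hpres]
      exact c.2.2
    · intro g hg
      exact Finset.mem_univ _
    · intro c hc
      apply Subtype.ext
      funext k
      ext e
      rw [mem_SSet, ← gOf_le_iff hα c.2.1 e k]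
    · intro g hg
      funext e
      apply Fin.val_injective
      show (Finset.univ.filter fun k : Fin α => e ∉ SSet G α g k.1).card = (g e : ℕ)
      have hflt : (Finset.univ.filter fun k : Fin α => e ∉ SSet G α g k.1)
          = (Finset.univ.filter fun k : Fin α => k.1 < (g e : ℕ)) := by
        apply Finset.filter_congr
        intro k _
        rw [mem_SSet]
        omega
      rw [hflt, card_fin_lt hα (by have := (g e).isLt; omega)]
    · intro c hc
      have hck : ∀ k : Fin α, c.1 k = SSet G α (gOf G α c.1) k.1 := by
        intro k
        ext e
        rw [mem_SSet, ← gOf_le_iff hα c.2.1 e k]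
      have htop : (G.restrictE (c.1 ⟨α - 1, by omega⟩)).bettiNat
          = bN G (SSet G α (gOf G α c.1) (α - 1)) := by
        rw [hck ⟨α - 1, by omega⟩]
        rfl
      have hexp : (∑ k ∈ Finset.univ.filter (fun k : Fin α => k.1 + 1 < α),
          (G.restrictE (c.1 k)).bettiNat)
          = ∑ k ∈ Finset.univ.filter (fun k : Fin α => k.1 + 1 < α),
            bN G (SSet G α (gOf G α c.1) k.1) := by
        refine Finset.sum_congr rfl fun k _ => ?_
        rw [hck k]
        rfl
      rw [htop, hexp]
  rw [hreindex]
  rw [← Finset.sum_fiberwise_of_maps_to (g := Phi G α) (t := Finset.univ.filter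
      (fun g : G.E → Fin (α + 1) => (G.restrictE (Present G α g)).Connected)) ?_]
  · rw [Polynomial.finset_sum_coeff]
    apply Finset.sum_nonneg
    intro p hp
    rcases Finset.eq_empty_or_nonempty ((Finset.univ.filter (fun g : G.E → Fin (α + 1) =>
        (G.restrictE (Present G α g)).Connected)).filter
          (fun g => Phi G α g = p)) with hemp | ⟨g₀, hg₀⟩
    · rw [hemp, Finset.sum_empty, Polynomial.coeff_zero]
    · rw [Finset.mem_filter, Finset.mem_filter] at hg₀
      obtain ⟨⟨-, hcon⟩, hPhig₀⟩ := hg₀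
      have hfib : ((Finset.univ.filter (fun g : G.E → Fin (α + 1) =>
          (G.restrictE (Present G α g)).Connected)).filter
            (fun g => Phi G α g = p))
          = Finset.univ.filter (fun g : G.E → Fin (α + 1) =>
              (G.restrictE (Present G α g)).Connected ∧ Phi G α g = Phi G α g₀) := by
        rw [Finset.filter_filter, hPhig₀]
      rw [hfib]
      obtain ⟨c, hc⟩ := fiber_sum hα hne g₀ hcon
      rw [hc, Polynomial.coeff_X_pow]
      split <;> norm_num
  · intro g hg
    rw [Finset.mem_filter] at hg ⊢
    refine ⟨Finset.mem_univ _, ?_⟩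
    rw [Present_Phi g, connected_restrict_iff hne, ← cc_present_eq_cc_TT g,
      ← connected_restrict_iff hne]
    exact hg.2
end
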